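/- arXiv:2303.16030 — 7 statements merged into one kernel-verified Lean document; each statement's English description precedes it below -/
import Mathlib

section
/- Let w_{λ,μ}(t) = t^{2μ+1}(1−t)(1−t²)^{λ−1/2} on (−1,1) with λ > −1/2 and μ an integer ≥ 0, and let C_{2n}^{(λ,μ)} denote the generalized Gegenbauer polynomial orthogonal with respect to |t|^{2μ}(1−t²)^{λ−1/2}. Then ∫_{−1}^{1} (C_{2n}^{(λ,μ+1/2)}(t))² w_{λ,μ}(t) dt = −∫_{−1}^{1} (C_{2n}^{(λ,μ)}(t))² |t|^{2μ+2}(1−t²)^{λ−1/2} dt < 0, so the functional f ↦ ∫ f w_{λ,μ} is not positive definite. -/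
open Polynomial MeasureTheory Set Function

private lemma gg_rpow_bound {t r : ℝ} (h1 : -1 ≤ t) (h2 : t ≤ 1) :
    (1 - t ^ 2) ^ r ≤ (1 - t) ^ r + (1 + t) ^ r := by
  have hu : (0:ℝ) ≤ 1 - t := by linarith
  have hv : (0:ℝ) ≤ 1 + t := by linarith
  have hfac : (1 - t ^ 2) ^ r = (1 - t) ^ r * (1 + t) ^ r := by
    rw [show 1 - t ^ 2 = (1 - t) * (1 + t) by ring, Real.mul_rpow hu hv]
  rw [hfac]
  rcases le_or_gt 0 r with hr | hr <;> rcases le_or_gt t 0 with ht | ht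
  · -- r ≥ 0, t ≤ 0 : (1+t)^r ≤ 1
    have : (1 + t) ^ r ≤ 1 := Real.rpow_le_one hv (by linarith) hr
    nlinarith [Real.rpow_nonneg hu r, Real.rpow_nonneg hv r]
  · -- r ≥ 0, t > 0 : (1-t)^r ≤ 1
    have : (1 - t) ^ r ≤ 1 := Real.rpow_le_one hu (by linarith) hr
    nlinarith [Real.rpow_nonneg hu r, Real.rpow_nonneg hv r]
  · -- r < 0, t ≤ 0 : 1 - t ≥ 1 so (1-t)^r ≤ 1
    have : (1 - t) ^ r ≤ 1 :=
      Real.rpow_le_one_of_one_le_of_nonpos (by linarith) hr.le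
    nlinarith [Real.rpow_nonneg hu r, Real.rpow_nonneg hv r]
  · -- r < 0, t > 0 : 1 + t ≥ 1 so (1+t)^r ≤ 1
    have : (1 + t) ^ r ≤ 1 :=
      Real.rpow_le_one_of_one_le_of_nonpos (by linarith) hr.le
    nlinarith [Real.rpow_nonneg hu r, Real.rpow_nonneg hv r]

private lemma gg_integrable (f : ℝ → ℝ) (hf : Continuous f) {r : ℝ} (hr : -1 < r) :
    IntervalIntegrable (fun t => f t * (1 - t ^ 2) ^ r) volume (-1 : ℝ) 1 := by
  obtain ⟨M, hM⟩ := (isCompact_Icc (a := (-1:ℝ)) (b := 1)).exists_bound_of_continuousOn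
    hf.continuousOn
  set M' : ℝ := max M 0 with hM'
  have hM'0 : 0 ≤ M' := le_max_right _ _
  have hMb : ∀ t ∈ Icc (-1:ℝ) 1, |f t| ≤ M' := fun t ht =>
    (hM t ht).trans (le_max_left _ _)
  -- the dominating function
  have hint1 : IntervalIntegrable (fun t : ℝ => (1 - t) ^ r) volume (-1 : ℝ) 1 := by
    have := (intervalIntegral.intervalIntegrable_rpow' hr (a := (2:ℝ)) (b := 0)).comp_sub_left 1
    norm_num at this
    exact this
  have hint2 : IntervalIntegrable (fun t : ℝ => (1 + t) ^ r) volume (-1 : ℝ) 1 := by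
    have := (intervalIntegral.intervalIntegrable_rpow' hr (a := (0:ℝ)) (b := 2)).comp_add_right 1
    norm_num at this
    simpa [add_comm] using this
  have hg : IntervalIntegrable
      (fun t : ℝ => M' * ((1 - t) ^ r + (1 + t) ^ r)) volume (-1 : ℝ) 1 :=
    ((hint1.add hint2).const_mul M')
  apply hg.mono_fun
  · apply Measurable.aestronglyMeasurable
    fun_prop
  · rw [Filter.EventuallyLE, ae_restrict_iff' measurableSet_uIoc]
    refine Filter.Eventually.of_forall fun t ht => ?_
    rw [Set.uIoc_of_le (by norm_num : (-1:ℝ) ≤ 1)] at ht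
    have ht1 : -1 ≤ t := ht.1.le
    have ht2 : t ≤ 1 := ht.2
    have hw : (0:ℝ) ≤ (1 - t ^ 2) ^ r := Real.rpow_nonneg (by nlinarith) r
    have hsum : (0:ℝ) ≤ (1 - t) ^ r + (1 + t) ^ r :=
      add_nonneg (Real.rpow_nonneg (by linarith) r) (Real.rpow_nonneg (by linarith) r)
    simp only [Real.norm_eq_abs, abs_mul, abs_of_nonneg hw,
      abs_of_nonneg (mul_nonneg hM'0 hsum)]
    calc |f t| * (1 - t ^ 2) ^ r ≤ M' * ((1 - t) ^ r + (1 + t) ^ r) := by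
          apply mul_le_mul (hMb t ⟨ht1, ht2⟩) (gg_rpow_bound ht1 ht2) hw hM'0

/-- For `λ > -1/2`, `μ ∈ ℕ` and the even polynomial `C = C_{2n}^{(λ,μ+1/2)}` (the generalized
Gegenbauer polynomial), the integral of `C²` against the sign-changing weight
`w_{λ,μ}(t) = t^(2μ+1)(1-t)(1-t²)^(λ-1/2)` equals
`-∫ C² |t|^(2μ+2)(1-t²)^(λ-1/2) < 0`; in particular the functional
`f ↦ ∫ f w_{λ,μ}` is not positive definite. -/
theorem generalized_gegenbauer_negative_norm
    (lam : ℝ) (hlam : -(1 / 2 : ℝ) < lam) (μ : ℕ) (n : ℕ)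
    (Cg : Polynomial ℝ) (hCeven : Cg.comp (-X) = Cg) (hC0 : Cg ≠ 0)
    (hCdeg : Cg.natDegree = 2 * n) :
    ((∫ t in (-1 : ℝ)..1,
        (Cg.eval t) ^ 2 * (t ^ (2 * μ + 1) * (1 - t) * (1 - t ^ 2) ^ (lam - 1 / 2))) =
      -∫ t in (-1 : ℝ)..1,
        (Cg.eval t) ^ 2 * (|t| ^ (2 * μ + 2) * (1 - t ^ 2) ^ (lam - 1 / 2))) ∧
    (∫ t in (-1 : ℝ)..1,
        (Cg.eval t) ^ 2 * (t ^ (2 * μ + 1) * (1 - t) * (1 - t ^ 2) ^ (lam - 1 / 2))) < 0 ∧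
    ¬ (∀ p : Polynomial ℝ, p ≠ 0 →
        0 < ∫ t in (-1 : ℝ)..1,
          (p.eval t) ^ 2 * (t ^ (2 * μ + 1) * (1 - t) * (1 - t ^ 2) ^ (lam - 1 / 2))) := by
  set r : ℝ := lam - 1 / 2 with hrdef
  have hr : (-1 : ℝ) < r := by simp only [hrdef]; linarith
  have heval : ∀ t : ℝ, Cg.eval (-t) = Cg.eval t := by
    intro t
    conv_rhs => rw [← hCeven]
    simp [eval_comp]
  have habs : ∀ t : ℝ, |t| ^ (2 * μ + 2) = t ^ (2 * μ + 2) := by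
    intro t
    rw [← abs_pow, abs_of_nonneg]
    rw [show 2 * μ + 2 = 2 * (μ + 1) by ring, pow_mul]
    exact pow_nonneg (sq_nonneg t) _
  set o : ℝ → ℝ := fun t => Cg.eval t ^ 2 * (t ^ (2 * μ + 1) * (1 - t ^ 2) ^ r) with ho_def
  set h : ℝ → ℝ := fun t => Cg.eval t ^ 2 * (t ^ (2 * μ + 2) * (1 - t ^ 2) ^ r) with hh_def
  have ho_int : IntervalIntegrable o volume (-1 : ℝ) 1 := by
    have := gg_integrable (fun t => Cg.eval t ^ 2 * t ^ (2 * μ + 1))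
      ((Cg.continuous.pow 2).mul (continuous_pow _)) hr
    simpa [ho_def, mul_assoc] using this
  have hh_int : IntervalIntegrable h volume (-1 : ℝ) 1 := by
    have := gg_integrable (fun t => Cg.eval t ^ 2 * t ^ (2 * μ + 2))
      ((Cg.continuous.pow 2).mul (continuous_pow _)) hr
    simpa [hh_def, mul_assoc] using this
  -- the odd part integrates to zero
  have ho_zero : (∫ t in (-1 : ℝ)..1, o t) = 0 := by
    have hodd : ∀ t : ℝ, o (-t) = -o t := by
      intro t
      simp only [ho_def, heval, neg_sq]
      rw [Odd.neg_pow ⟨μ, by ring⟩ t]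
      ring
    have := intervalIntegral.integral_comp_neg (a := (-1:ℝ)) (b := 1) o
    simp only [neg_neg] at this
    simp only [hodd, intervalIntegral.integral_neg] at this
    linarith
  -- decomposition of the first integrand
  have hsplit : (∫ t in (-1 : ℝ)..1,
      (Cg.eval t) ^ 2 * (t ^ (2 * μ + 1) * (1 - t) * (1 - t ^ 2) ^ r)) =
      (∫ t in (-1 : ℝ)..1, o t) - ∫ t in (-1 : ℝ)..1, h t := by
    rw [← intervalIntegral.integral_sub ho_int hh_int]
    apply intervalIntegral.integral_congr
    intro t _
    simp only [ho_def, hh_def]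
    ring
  -- positivity of ∫ h
  have hh_pos : 0 < ∫ t in (-1 : ℝ)..1, h t := by
    rw [intervalIntegral.integral_pos_iff_support_of_nonneg_ae' ?_ hh_int]
    constructor
    · norm_num
    · -- the support contains Ioo 0 1 minus the roots of Cg
      have hroots : ({x : ℝ | Cg.IsRoot x}).Finite := Polynomial.finite_setOf_isRoot hC0
      have hsub : Ioo (0:ℝ) 1 \ {x : ℝ | Cg.IsRoot x} ⊆ support h ∩ Ioc (-1 : ℝ) 1 := by
        rintro t ⟨⟨ht0, ht1⟩, htr⟩
        have hne : Cg.eval t ≠ 0 := htr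
        have h1 : (0:ℝ) < Cg.eval t ^ 2 :=
          lt_of_le_of_ne (sq_nonneg _) (Ne.symm (pow_ne_zero _ hne))
        have h2 : (0:ℝ) < t ^ (2 * μ + 2) := pow_pos ht0 _
        have h3 : (0:ℝ) < (1 - t ^ 2) ^ r :=
          Real.rpow_pos_of_pos (by nlinarith) r
        refine ⟨?_, by constructor <;> linarith⟩
        simp only [mem_support, hh_def]
        positivity
      calc (0 : ENNReal) < volume (Ioo (0:ℝ) 1 \ {x : ℝ | Cg.IsRoot x}) := by
            rw [measure_diff_null (hroots.measure_zero _)]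
            simp
        _ ≤ volume (support h ∩ Ioc (-1 : ℝ) 1) := measure_mono hsub
    · rw [Filter.EventuallyLE, ae_restrict_iff' measurableSet_uIoc]
      refine Filter.Eventually.of_forall fun t ht => ?_
      rw [Set.uIoc_of_le (by norm_num : (-1:ℝ) ≤ 1)] at ht
      have : (0:ℝ) ≤ (1 - t ^ 2) ^ r :=
        Real.rpow_nonneg (by nlinarith [ht.1.le, ht.2]) r
      simp only [hh_def]
      have h2 : (0:ℝ) ≤ t ^ (2 * μ + 2) := by
        rw [show 2 * μ + 2 = 2 * (μ + 1) by ring, pow_mul]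
        exact pow_nonneg (sq_nonneg t) _
      exact mul_nonneg (sq_nonneg _) (mul_nonneg h2 this)
  have heq : (∫ t in (-1 : ℝ)..1,
      (Cg.eval t) ^ 2 * (t ^ (2 * μ + 1) * (1 - t) * (1 - t ^ 2) ^ r)) =
      -∫ t in (-1 : ℝ)..1,
        (Cg.eval t) ^ 2 * (|t| ^ (2 * μ + 2) * (1 - t ^ 2) ^ r) := by
    rw [hsplit, ho_zero, zero_sub]
    congr 1
    apply intervalIntegral.integral_congr
    intro t _
    simp only [hh_def, habs]
  refine ⟨heq, ?_, ?_⟩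
  · rw [hsplit, ho_zero, zero_sub]
    linarith
  · intro hall
    have := hall Cg hC0
    rw [hsplit, ho_zero, zero_sub] at this
    linarith
end

section
/- With M_n nonsingular and M_{n-1} nonsingular, the matrix L(𝐏̂_n 𝐏̂_n^T) equals the Schur complement M_{n,n} − M_{n-1,n}^T M_{n-1}^{-1} M_{n-1,n}, and this matrix is symmetric and nonsingular. -/
open MvPolynomial Matrix Finset

/-- Multi-indices in `d` variables of total degree exactly `m`. -/
abbrev ExactDeg (d m : ℕ) := {α : Fin d → Fin (m + 1) // ∑ i, (α i : ℕ) = m}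

/-- Multi-indices in `d` variables of total degree at most `m`. -/
abbrev DegLE (d m : ℕ) := {α : Fin d → Fin (m + 1) // ∑ i, (α i : ℕ) ≤ m}

/-- The monomial `x^α`. -/
noncomputable def xpow {d : ℕ} (α : Fin d → ℕ) : MvPolynomial (Fin d) ℝ :=
  ∏ i, X i ^ α i

/-- The moment matrix `M_m = [μ_{α+β} : |α|,|β| ≤ m]`. -/
noncomputable def momentMat {d : ℕ} (L : MvPolynomial (Fin d) ℝ →ₗ[ℝ] ℝ) (m : ℕ) :
    Matrix (DegLE d m) (DegLE d m) ℝ :=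
  Matrix.of fun a b =>
    L (xpow (fun i => (a.1 i : ℕ)) * xpow (fun i => (b.1 i : ℕ)))

/-- The block `M_{m,m+1} = [μ_{α+β} : |α| ≤ m, |β| = m+1]`. -/
noncomputable def crossMat {d : ℕ} (L : MvPolynomial (Fin d) ℝ →ₗ[ℝ] ℝ) (m : ℕ) :
    Matrix (DegLE d m) (ExactDeg d (m + 1)) ℝ :=
  Matrix.of fun a b =>
    L (xpow (fun i => (a.1 i : ℕ)) * xpow (fun i => (b.1 i : ℕ)))

/-- The block `M_{m+1,m+1} = [μ_{α+β} : |α| = |β| = m+1]`. -/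
noncomputable def topMat {d : ℕ} (L : MvPolynomial (Fin d) ℝ →ₗ[ℝ] ℝ) (m : ℕ) :
    Matrix (ExactDeg d (m + 1)) (ExactDeg d (m + 1)) ℝ :=
  Matrix.of fun a b =>
    L (xpow (fun i => (a.1 i : ℕ)) * xpow (fun i => (b.1 i : ℕ)))

/-- The monic orthogonal polynomial `P_β = x^β - ∑_γ (M_n⁻¹ M_{n,n+1})_{γβ} x^γ`. -/
noncomputable def monicOP {d : ℕ} (L : MvPolynomial (Fin d) ℝ →ₗ[ℝ] ℝ) (n : ℕ)
    (β : ExactDeg d (n + 1)) : MvPolynomial (Fin d) ℝ :=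
  xpow (fun i => (β.1 i : ℕ)) -
    ∑ γ : DegLE d n, ((momentMat L n)⁻¹ * crossMat L n) γ β • xpow (fun i => (γ.1 i : ℕ))

/-! The polynomials `P_β` are orthogonal to every monomial `x^γ` of degree `≤ n`, since
`L(x^γ P_β) = (M_{n,n+1} - M_n M_n⁻¹ M_{n,n+1})_{γβ} = 0`. Hence in `L(P_β P_β')` only the
leading monomial of the first factor contributes, and
`L(x^β P_β') = (M_{n+1,n+1} - M_{n,n+1}ᵀ M_n⁻¹ M_{n,n+1})_{ββ'}`: this is the Schur complement `S`
of `M_n` in `M_{n+1}`, once the multi-indices of degree `≤ n + 1` are ordered by degree. Hence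
`det M_{n+1} = det M_n · det S`, and `S` is nonsingular. -/

section GramMatrix

variable {R A ι κ ν : Type*} [CommRing R] [Ring A] [Algebra R A] (L : A →ₗ[R] R)

def gramMatrix (p : ι → A) (q : κ → A) : Matrix ι κ R :=
  of fun i j => L (p i * q j)

lemma gramMatrix_sub_left (p p' : ι → A) (q : κ → A) :
    gramMatrix L (p - p') q = gramMatrix L p q - gramMatrix L p' q := by
  ext i j
  simp [gramMatrix, sub_mul]

lemma gramMatrix_sub_right (p : ι → A) (q q' : κ → A) :
    gramMatrix L p (q - q') = gramMatrix L p q - gramMatrix L p q' := by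
  ext i j
  simp [gramMatrix, mul_sub]

lemma gramMatrix_sum_smul_left [Fintype ν] (C : Matrix ν ι R) (p : ν → A) (q : κ → A) :
    gramMatrix L (fun i => ∑ l, C l i • p l) q = Cᵀ * gramMatrix L p q := by
  ext i j
  simp [gramMatrix, mul_apply, Finset.sum_mul]

lemma gramMatrix_sum_smul_right [Fintype ν] (p : ι → A) (C : Matrix ν κ R) (q : ν → A) :
    gramMatrix L p (fun k => ∑ l, C l k • q l) = gramMatrix L p q * C := by
  ext i j
  simp [gramMatrix, mul_apply, Finset.mul_sum, mul_comm]

end GramMatrix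

section CommGramMatrix

variable {R A ι κ : Type*} [CommRing R] [CommRing A] [Algebra R A] (L : A →ₗ[R] R)

lemma gramMatrix_transpose (p : ι → A) (q : κ → A) :
    (gramMatrix L p q)ᵀ = gramMatrix L q p := by
  ext i j
  simp [gramMatrix, mul_comm]

lemma gramMatrix_isSymm (p : ι → A) : (gramMatrix L p p).IsSymm :=
  gramMatrix_transpose L p p

end CommGramMatrix

def splitEquiv (d n : ℕ) : DegLE d n ⊕ ExactDeg d (n + 1) ≃ DegLE d (n + 1) where
  toFun := Sum.elim (fun a => ⟨fun i => (a.1 i).castSucc, by simpa using a.2.trans n.le_succ⟩)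
    (fun b => ⟨b.1, b.2.le⟩)
  invFun c :=
    if h : ∑ i, (c.1 i : ℕ) ≤ n then
      Sum.inl ⟨fun i => ⟨c.1 i, Nat.lt_succ_of_le <|
        (Finset.single_le_sum (fun j _ => Nat.zero_le (c.1 j : ℕ)) (mem_univ i)).trans h⟩,
        by simpa using h⟩
    else Sum.inr ⟨c.1, by have := c.2; omega⟩
  left_inv := by
    rintro (a | b)
    · simp [a.2]
    · simp [b.2]
  right_inv c := by
    by_cases h : ∑ i, (c.1 i : ℕ) ≤ n <;> simp [h]

section MomentMatrices

variable {d : ℕ} (L : MvPolynomial (Fin d) ℝ →ₗ[ℝ] ℝ) (n : ℕ)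

/-- Stated for any subtype of `Fin d → Fin (k + 1)`, so that it serves both `DegLE` and `ExactDeg`. -/
noncomputable def monomialVec {k : ℕ} {P : (Fin d → Fin (k + 1)) → Prop} (α : Subtype P) :
    MvPolynomial (Fin d) ℝ :=
  xpow fun i => (α.1 i : ℕ)

lemma momentMat_eq_gramMatrix (m : ℕ) :
    momentMat L m = gramMatrix L monomialVec monomialVec := rfl

lemma crossMat_eq_gramMatrix : crossMat L n = gramMatrix L monomialVec monomialVec := rfl

lemma monicOP_eq : monicOP L n =
    monomialVec - fun β => ∑ γ, ((momentMat L n)⁻¹ * crossMat L n) γ β • monomialVec γ := rfl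

lemma gramMatrix_monomialVec_monicOP (hM : IsUnit (momentMat L n).det) :
    gramMatrix L (monomialVec : DegLE d n → _) (monicOP L n) = 0 := by
  rw [monicOP_eq, gramMatrix_sub_right, gramMatrix_sum_smul_right, ← crossMat_eq_gramMatrix,
    ← momentMat_eq_gramMatrix, mul_nonsing_inv_cancel_left _ _ hM, sub_self]

lemma gramMatrix_monicOP (hM : IsUnit (momentMat L n).det) :
    gramMatrix L (monicOP L n) (monicOP L n) =
      topMat L n - (crossMat L n)ᵀ * (momentMat L n)⁻¹ * crossMat L n :=
  calc gramMatrix L (monicOP L n) (monicOP L n)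
      = gramMatrix L monomialVec (monicOP L n) - ((momentMat L n)⁻¹ * crossMat L n)ᵀ *
          gramMatrix L (monomialVec : DegLE d n → _) (monicOP L n) := by
        rw [← gramMatrix_sum_smul_left, ← gramMatrix_sub_left, ← monicOP_eq]
    _ = gramMatrix L monomialVec (monicOP L n) := by
        rw [gramMatrix_monomialVec_monicOP L n hM, Matrix.mul_zero, sub_zero]
    _ = topMat L n - (crossMat L n)ᵀ * (momentMat L n)⁻¹ * crossMat L n := by
        rw [monicOP_eq, gramMatrix_sub_right, gramMatrix_sum_smul_right, crossMat_eq_gramMatrix,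
          gramMatrix_transpose, Matrix.mul_assoc]
        rfl

lemma momentMat_succ_submatrix_splitEquiv :
    (momentMat L (n + 1)).submatrix (splitEquiv d n) (splitEquiv d n) =
      fromBlocks (momentMat L n) (crossMat L n) (crossMat L n)ᵀ (topMat L n) := by
  ext (a | b) (a' | b') <;>
    simp [momentMat, crossMat, topMat, splitEquiv, mul_comm]

lemma det_momentMat_succ (hM : IsUnit (momentMat L n).det) :
    (momentMat L (n + 1)).det = (momentMat L n).det *
      (topMat L n - (crossMat L n)ᵀ * (momentMat L n)⁻¹ * crossMat L n).det := by
  have := (momentMat L n).invertibleOfIsUnitDet hM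
  rw [← det_submatrix_equiv_self (splitEquiv d n), momentMat_succ_submatrix_splitEquiv,
    det_fromBlocks₁₁, invOf_eq_nonsing_inv]

end MomentMatrices

/-- The Gram matrix `L(𝐏̂_{n+1} 𝐏̂_{n+1}ᵀ)` of the monic orthogonal polynomials of degree `n+1`
equals the Schur complement `M_{n+1,n+1} - M_{n,n+1}ᵀ M_n⁻¹ M_{n,n+1}`, and this matrix is
symmetric and nonsingular. -/
theorem gram_eq_schurComplement
    (d n : ℕ) (L : MvPolynomial (Fin d) ℝ →ₗ[ℝ] ℝ)
    (hdef : ∀ m : ℕ, IsUnit (momentMat L m).det) :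
    (Matrix.of fun b b' : ExactDeg d (n + 1) => L (monicOP L n b * monicOP L n b')) =
        topMat L n - (crossMat L n)ᵀ * (momentMat L n)⁻¹ * crossMat L n ∧
    (Matrix.of fun b b' : ExactDeg d (n + 1) => L (monicOP L n b * monicOP L n b')).IsSymm ∧
    IsUnit (Matrix.of fun b b' : ExactDeg d (n + 1) => L (monicOP L n b * monicOP L n b')).det := by
  have hS := gramMatrix_monicOP L n (hdef n)
  refine ⟨hS, gramMatrix_isSymm L (monicOP L n), ?_⟩
  have hdet := hdef (n + 1)
  rw [det_momentMat_succ L n (hdef n)] at hdet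
  change IsUnit (gramMatrix L (monicOP L n) (monicOP L n)).det
  exact hS ▸ (IsUnit.mul_iff.mp hdet).2
end

section
/- Let (ℙ_n) be a sign-orthonormal family, i.e., L(ℙ_n ℙ_m^T) = δ_{n,m} S_n with S_n a signature matrix. If x_i S_n ℙ_n = A_{n,i} ℙ_{n+1} + B_{n,i} ℙ_n + C_{n,i} ℙ_{n-1}, then A_{n,i} S_{n+1} = S_n L(x_i ℙ_n ℙ_{n+1}^T), B_{n,i} is symmetric, and C_{n,i} = A_{n-1,i}^T. -/
open MvPolynomial Matrix Finset

/-- For a sign-orthonormal family `ℙ_n` (i.e. `L(ℙ_n ℙ_mᵀ) = δ_{nm} S_n` with `S_n = diag(ε_n)`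
a signature matrix) satisfying `x_i S_n ℙ_n = A_{n,i} ℙ_{n+1} + B_{n,i} ℙ_n + C_{n,i} ℙ_{n-1}`,
one has `A_{n,i} S_{n+1} = S_n L(x_i ℙ_n ℙ_{n+1}ᵀ)`, `B_{n,i}` is symmetric, and
`C_{n,i} = A_{n-1,i}ᵀ`. -/
theorem sign_orthonormal_three_term_coefficients
    (d : ℕ) (L : MvPolynomial (Fin d) ℝ →ₗ[ℝ] ℝ)
    (P : ∀ k : ℕ, ExactDeg d k → MvPolynomial (Fin d) ℝ)
    (ε : ∀ k : ℕ, ExactDeg d k → ℝ)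
    (hsign : ∀ k a, ε k a = 1 ∨ ε k a = -1)
    (hortho : ∀ (k : ℕ) (a b : ExactDeg d k),
      L (P k a * P k b) = if a = b then ε k a else 0)
    (horthoNe : ∀ k m : ℕ, k ≠ m → ∀ (a : ExactDeg d k) (b : ExactDeg d m),
      L (P k a * P m b) = 0)
    (A : ∀ k : ℕ, Fin d → Matrix (ExactDeg d k) (ExactDeg d (k + 1)) ℝ)
    (B : ∀ k : ℕ, Fin d → Matrix (ExactDeg d k) (ExactDeg d k) ℝ)
    (Cc : ∀ k : ℕ, Fin d → Matrix (ExactDeg d (k + 1)) (ExactDeg d k) ℝ)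
    (hrec0 : ∀ (i : Fin d) (a : ExactDeg d 0),
      X i * (ε 0 a • P 0 a) =
        (∑ c, A 0 i a c • P 1 c) + ∑ b, B 0 i a b • P 0 b)
    (hrecS : ∀ (m : ℕ) (i : Fin d) (a : ExactDeg d (m + 1)),
      X i * (ε (m + 1) a • P (m + 1) a) =
        (∑ c, A (m + 1) i a c • P (m + 2) c) + (∑ b, B (m + 1) i a b • P (m + 1) b)
          + ∑ b, Cc m i a b • P m b) :
    (∀ (n : ℕ) (i : Fin d),
        A n i * Matrix.diagonal (ε (n + 1)) =
          Matrix.of fun (a : ExactDeg d n) (c : ExactDeg d (n + 1)) =>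
            ε n a * L (X i * P n a * P (n + 1) c)) ∧
    (∀ (n : ℕ) (i : Fin d), (B n i)ᵀ = B n i) ∧
    (∀ (m : ℕ) (i : Fin d), Cc m i = (A m i)ᵀ) := by
  have key0 : ∀ (i : Fin d) (a : ExactDeg d 0) (k : ℕ) (b : ExactDeg d k),
      ε 0 a * L (X i * P 0 a * P k b) =
        (∑ c, A 0 i a c * L (P 1 c * P k b))
        + ∑ c, B 0 i a c * L (P 0 c * P k b) := by
    intro i a k b
    have h := congrArg (fun q => L (q * P k b)) (hrec0 i a)
    simpa [mul_smul_comm, smul_mul_assoc, add_mul, Finset.sum_mul, mul_assoc] using h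
  have keyS : ∀ (m : ℕ) (i : Fin d) (a : ExactDeg d (m+1)) (k : ℕ) (b : ExactDeg d k),
      ε (m+1) a * L (X i * P (m+1) a * P k b) =
        (∑ c, A (m+1) i a c * L (P (m+2) c * P k b))
        + (∑ c, B (m+1) i a c * L (P (m+1) c * P k b))
        + ∑ c, Cc m i a c * L (P m c * P k b) := by
    intro m i a k b
    have h := congrArg (fun q => L (q * P k b)) (hrecS m i a)
    simpa [mul_smul_comm, smul_mul_assoc, add_mul, Finset.sum_mul, mul_assoc] using h
  have hA : ∀ (n : ℕ) (i : Fin d) (a : ExactDeg d n) (b : ExactDeg d (n+1)),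
      ε n a * L (X i * P n a * P (n+1) b) = A n i a b * ε (n+1) b := by
    intro n i a b
    cases n with
    | zero =>
      have h1 : (0 : ℕ) ≠ 1 := by omega
      simpa [hortho, horthoNe _ _ h1, mul_ite, Finset.sum_ite_eq'] using key0 i a 1 b
    | succ m =>
      have h1 : (m : ℕ) + 1 ≠ m + 2 := by omega
      have h2 : (m : ℕ) ≠ m + 2 := by omega
      simpa [hortho, horthoNe _ _ h1, horthoNe _ _ h2, mul_ite,
        Finset.sum_ite_eq'] using keyS m i a (m+2) b
  have hB : ∀ (n : ℕ) (i : Fin d) (a b : ExactDeg d n),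
      ε n a * L (X i * P n a * P n b) = B n i a b * ε n b := by
    intro n i a b
    cases n with
    | zero =>
      have h1 : (1 : ℕ) ≠ 0 := by omega
      simpa [hortho, horthoNe _ _ h1, mul_ite, Finset.sum_ite_eq'] using key0 i a 0 b
    | succ m =>
      have h1 : (m : ℕ) + 2 ≠ m + 1 := by omega
      have h2 : (m : ℕ) ≠ m + 1 := by omega
      simpa [hortho, horthoNe _ _ h1, horthoNe _ _ h2, mul_ite,
        Finset.sum_ite_eq'] using keyS m i a (m+1) b
  have hC : ∀ (m : ℕ) (i : Fin d) (a : ExactDeg d (m+1)) (b : ExactDeg d m),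
      ε (m+1) a * L (X i * P (m+1) a * P m b) = Cc m i a b * ε m b := by
    intro m i a b
    have h1 : (m : ℕ) + 2 ≠ m := by omega
    have h2 : (m : ℕ) + 1 ≠ m := by omega
    simpa [hortho, horthoNe _ _ h1, horthoNe _ _ h2, mul_ite,
      Finset.sum_ite_eq'] using keyS m i a m b
  have hsq : ∀ (k : ℕ) (a : ExactDeg d k), ε k a * ε k a = 1 := by
    intro k a; rcases hsign k a with h | h <;> simp [h]
  refine ⟨?_, ?_, ?_⟩
  · intro n i
    ext a c
    simp only [Matrix.mul_diagonal, Matrix.of_apply]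
    exact (hA n i a c).symm
  · intro n i
    ext a b
    have h1 := hB n i a b
    have h2 := hB n i b a
    have hcomm : L (X i * P n b * P n a) = L (X i * P n a * P n b) :=
      congrArg L (by ring)
    rw [hcomm] at h2
    have e1 : B n i a b = ε n a * L (X i * P n a * P n b) * ε n b := by
      linear_combination (-(ε n b)) * h1 - B n i a b * hsq n b
    have e2 : B n i b a = ε n b * L (X i * P n a * P n b) * ε n a := by
      linear_combination (-(ε n a)) * h2 - B n i b a * hsq n a
    simp only [Matrix.transpose_apply]
    rw [e1, e2]; ring
  · intro m i
    ext a b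
    have h1 := hC m i a b
    have h2 := hA m i b a
    have hcomm : L (X i * P m b * P (m+1) a) = L (X i * P (m+1) a * P m b) :=
      congrArg L (by ring)
    rw [hcomm] at h2
    have e1 : Cc m i a b = ε (m+1) a * L (X i * P (m+1) a * P m b) * ε m b := by
      linear_combination (-(ε m b)) * h1 - Cc m i a b * hsq m b
    have e2 : A m i b a = ε m b * L (X i * P (m+1) a * P m b) * ε (m+1) a := by
      linear_combination (-(ε (m+1) a)) * h2 - A m i b a * hsq (m+1) a
    simp only [Matrix.transpose_apply]
    rw [e1, e2]; ring
end

section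
/- For sign-orthonormal polynomials satisfying the three-term relations x_i S_n ℙ_n = A_{n,i} ℙ_{n+1} + B_{n,i} ℙ_n + A_{n-1,i}^T ℙ_{n-1}, the commutativity relation A_{n,i} S_{n+1} A_{n+1,j} = A_{n,j} S_{n+1} A_{n+1,i} holds for all 1 ≤ i, j ≤ d and n ≥ 0. -/
open MvPolynomial Matrix Finset

/-- For sign-orthonormal polynomials satisfying the three-term relations
`x_i S_n ℙ_n = A_{n,i} ℙ_{n+1} + B_{n,i} ℙ_n + A_{n-1,i}ᵀ ℙ_{n-1}`, the commutativity relation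
`A_{n,i} S_{n+1} A_{n+1,j} = A_{n,j} S_{n+1} A_{n+1,i}` holds for all `i, j` and `n ≥ 0`. -/
theorem sign_orthonormal_commutativity_A
    (d : ℕ) (L : MvPolynomial (Fin d) ℝ →ₗ[ℝ] ℝ)
    (P : ∀ k : ℕ, ExactDeg d k → MvPolynomial (Fin d) ℝ)
    (ε : ∀ k : ℕ, ExactDeg d k → ℝ)
    (hsign : ∀ k a, ε k a = 1 ∨ ε k a = -1)
    (hortho : ∀ (k : ℕ) (a b : ExactDeg d k),
      L (P k a * P k b) = if a = b then ε k a else 0)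
    (horthoNe : ∀ k m : ℕ, k ≠ m → ∀ (a : ExactDeg d k) (b : ExactDeg d m),
      L (P k a * P m b) = 0)
    (A : ∀ k : ℕ, Fin d → Matrix (ExactDeg d k) (ExactDeg d (k + 1)) ℝ)
    (B : ∀ k : ℕ, Fin d → Matrix (ExactDeg d k) (ExactDeg d k) ℝ)
    (Cc : ∀ k : ℕ, Fin d → Matrix (ExactDeg d (k + 1)) (ExactDeg d k) ℝ)
    (hrec0 : ∀ (i : Fin d) (a : ExactDeg d 0),
      X i * (ε 0 a • P 0 a) =
        (∑ c, A 0 i a c • P 1 c) + ∑ b, B 0 i a b • P 0 b)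
    (hrecS : ∀ (m : ℕ) (i : Fin d) (a : ExactDeg d (m + 1)),
      X i * (ε (m + 1) a • P (m + 1) a) =
        (∑ c, A (m + 1) i a c • P (m + 2) c) + (∑ b, B (m + 1) i a b • P (m + 1) b)
          + ∑ b, Cc m i a b • P m b) :
    ∀ (n : ℕ) (i j : Fin d),
      A n i * Matrix.diagonal (ε (n + 1)) * A (n + 1) j =
        A n j * Matrix.diagonal (ε (n + 1)) * A (n + 1) i := by
  have hsq : ∀ k (a : ExactDeg d k), ε k a * ε k a = 1 := by
    intro k a; rcases hsign k a with h | h <;> rw [h] <;> norm_num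
  have hne : ∀ k (a : ExactDeg d k), ε k a ≠ 0 := by
    intro k a; rcases hsign k a with h | h <;> rw [h] <;> norm_num
  -- expansion lemmas
  have hL0 : ∀ (i : Fin d) (a : ExactDeg d 0) (g : MvPolynomial (Fin d) ℝ),
      ε 0 a * L (X i * P 0 a * g) =
        (∑ c, A 0 i a c * L (P 1 c * g)) + ∑ b, B 0 i a b * L (P 0 b * g) := by
    intro i a g
    have h := congrArg (fun p => L (p * g)) (hrec0 i a)
    simpa only [mul_smul_comm, smul_mul_assoc, add_mul, Finset.sum_mul,
      map_add, map_sum, _root_.map_smul, smul_eq_mul] using h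
  have hLS : ∀ (m : ℕ) (i : Fin d) (a : ExactDeg d (m + 1)) (g : MvPolynomial (Fin d) ℝ),
      ε (m + 1) a * L (X i * P (m + 1) a * g) =
        (∑ c, A (m + 1) i a c * L (P (m + 2) c * g))
          + (∑ b, B (m + 1) i a b * L (P (m + 1) b * g))
          + ∑ b, Cc m i a b * L (P m b * g) := by
    intro m i a g
    have h := congrArg (fun p => L (p * g)) (hrecS m i a)
    simpa only [mul_smul_comm, smul_mul_assoc, add_mul, Finset.sum_mul,
      map_add, map_sum, _root_.map_smul, smul_eq_mul] using h
  have hvanish : ∀ (n : ℕ) (i : Fin d) (a : ExactDeg d n) (m : ℕ) (b : ExactDeg d m),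
      n + 1 < m → L (X i * P n a * P m b) = 0 := by
    intro n i a m b hm
    have key : ε n a * L (X i * P n a * P m b) = 0 := by
      cases n with
      | zero =>
        rw [hL0]
        have h1 : ∀ c : ExactDeg d 1, L (P 1 c * P m b) = 0 :=
          fun c => horthoNe 1 m (by omega) c b
        have h0 : ∀ c : ExactDeg d 0, L (P 0 c * P m b) = 0 :=
          fun c => horthoNe 0 m (by omega) c b
        simp [h1, h0]
      | succ k =>
        rw [hLS]
        have h2 : ∀ c : ExactDeg d (k + 2), L (P (k + 2) c * P m b) = 0 :=
          fun c => horthoNe (k + 2) m (by omega) c b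
        have h1 : ∀ c : ExactDeg d (k + 1), L (P (k + 1) c * P m b) = 0 :=
          fun c => horthoNe (k + 1) m (by omega) c b
        have h0 : ∀ c : ExactDeg d k, L (P k c * P m b) = 0 :=
          fun c => horthoNe k m (by omega) c b
        simp [h2, h1, h0]
    exact (mul_eq_zero.mp key).resolve_left (hne n a)
  have hA : ∀ (n : ℕ) (i : Fin d) (a : ExactDeg d n) (b : ExactDeg d (n + 1)),
      L (X i * P n a * P (n + 1) b) = ε n a * (A n i a b * ε (n + 1) b) := by
    intro n i a b
    have key : ε n a * L (X i * P n a * P (n + 1) b) = A n i a b * ε (n + 1) b := by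
      cases n with
      | zero =>
        rw [hL0]
        have h0 : ∀ c : ExactDeg d 0, L (P 0 c * P 1 b) = 0 :=
          fun c => horthoNe 0 1 (by omega) c b
        have h1 : ∀ c : ExactDeg d 1, L (P 1 c * P 1 b) = if c = b then ε 1 c else 0 :=
          fun c => hortho 1 c b
        simp [h0, h1, mul_ite, Finset.sum_ite_eq']
      | succ k =>
        rw [hLS]
        have h2 : ∀ c : ExactDeg d (k + 2), L (P (k + 2) c * P (k + 2) b) =
            if c = b then ε (k + 2) c else 0 := fun c => hortho (k + 2) c b
        have h1 : ∀ c : ExactDeg d (k + 1), L (P (k + 1) c * P (k + 2) b) = 0 :=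
          fun c => horthoNe (k + 1) (k + 2) (by omega) c b
        have h0 : ∀ c : ExactDeg d k, L (P k c * P (k + 2) b) = 0 :=
          fun c => horthoNe k (k + 2) (by omega) c b
        simp [h2, h1, h0, mul_ite, Finset.sum_ite_eq']
    have h2 := congrArg (fun t => ε n a * t) key
    rw [← mul_assoc, hsq, one_mul] at h2
    exact h2
  have hC : ∀ (n : ℕ) (i : Fin d) (a : ExactDeg d (n + 1)) (b : ExactDeg d n),
      L (X i * P (n + 1) a * P n b) = ε (n + 1) a * (Cc n i a b * ε n b) := by
    intro n i a b
    have key : ε (n + 1) a * L (X i * P (n + 1) a * P n b) = Cc n i a b * ε n b := by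
      rw [hLS]
      have h2 : ∀ c : ExactDeg d (n + 2), L (P (n + 2) c * P n b) = 0 :=
        fun c => horthoNe (n + 2) n (by omega) c b
      have h1 : ∀ c : ExactDeg d (n + 1), L (P (n + 1) c * P n b) = 0 :=
        fun c => horthoNe (n + 1) n (by omega) c b
      have h0 : ∀ c : ExactDeg d n, L (P n c * P n b) = if c = b then ε n c else 0 :=
        fun c => hortho n c b
      simp [h2, h1, h0, mul_ite, Finset.sum_ite_eq']
    have h2 := congrArg (fun t => ε (n + 1) a * t) key
    rw [← mul_assoc, hsq, one_mul] at h2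
    exact h2
  have hCA : ∀ (n : ℕ) (i : Fin d) (a : ExactDeg d (n + 1)) (b : ExactDeg d n),
      Cc n i a b = A n i b a := by
    intro n i a b
    have e1 := hC n i a b
    have e2 := hA n i b a
    have hp : X i * P (n + 1) a * P n b = X i * P n b * P (n + 1) a := by ring
    rw [hp, e2] at e1
    -- e1 : ε n b * (A n i b a * ε (n+1) a) = ε (n+1) a * (Cc n i a b * ε n b)
    have hx := hsq (n + 1) a
    have hy := hsq n b
    linear_combination (-(ε (n + 1) a * ε n b)) * e1
      - (Cc n i a b - A n i b a) * (ε n b * ε n b) * hx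
      - (Cc n i a b - A n i b a) * hy
  intro n i j
  have main : ∀ (i j : Fin d) (a : ExactDeg d n) (c : ExactDeg d (n + 2)),
      ε (n + 2) c * L (X j * P (n + 2) c * (X i * P n a)) =
        ε n a * ∑ b, Cc (n + 1) j c b * (A n i a b * ε (n + 1) b) := by
    intro i j a c
    rw [hLS (n + 1) j c (X i * P n a)]
    have hz3 : ∀ c' : ExactDeg d (n + 3), L (P (n + 3) c' * (X i * P n a)) = 0 := by
      intro c'
      rw [show P (n + 3) c' * (X i * P n a) = X i * P n a * P (n + 3) c' by ring]
      exact hvanish n i a (n + 3) c' (by omega)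
    have hz2 : ∀ b : ExactDeg d (n + 2), L (P (n + 2) b * (X i * P n a)) = 0 := by
      intro b
      rw [show P (n + 2) b * (X i * P n a) = X i * P n a * P (n + 2) b by ring]
      exact hvanish n i a (n + 2) b (by omega)
    have hb : ∀ b : ExactDeg d (n + 1),
        L (P (n + 1) b * (X i * P n a)) = ε n a * (A n i a b * ε (n + 1) b) := by
      intro b
      rw [mul_comm]
      exact hA n i a b
    simp only [hz3, hz2, hb, mul_zero, Finset.sum_const_zero, zero_add, add_zero]
    rw [Finset.mul_sum]
    exact Finset.sum_congr rfl fun b _ => by ring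
  ext a c
  have e1 := main i j a c
  have e2 := main j i a c
  have hpoly : X j * P (n + 2) c * (X i * P n a) = X i * P (n + 2) c * (X j * P n a) := by
    ring
  rw [hpoly] at e1
  have e3 := mul_left_cancel₀ (hne n a) (e1.symm.trans e2)
  -- e3 : ∑ b, Cc (n+1) j c b * (A n i a b * ε (n+1) b) = ∑ b, Cc (n+1) i c b * (A n j a b * ε (n+1) b)
  simp only [hCA] at e3
  have entry : ∀ (M : Matrix (ExactDeg d n) (ExactDeg d (n + 1)) ℝ)
      (N : Matrix (ExactDeg d (n + 1)) (ExactDeg d (n + 2)) ℝ),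
      (M * Matrix.diagonal (ε (n + 1)) * N) a c = ∑ b, M a b * ε (n + 1) b * N b c := by
    intro M N
    rw [Matrix.mul_apply]
    exact Finset.sum_congr rfl fun b _ => by rw [Matrix.mul_diagonal]
  rw [entry (A n i) (A (n + 1) j), entry (A n j) (A (n + 1) i)]
  have g1 : ∑ b, A n i a b * ε (n + 1) b * A (n + 1) j b c =
      ∑ b, A (n + 1) j b c * (A n i a b * ε (n + 1) b) :=
    Finset.sum_congr rfl fun b _ => by ring
  have g2 : ∑ b, A n j a b * ε (n + 1) b * A (n + 1) i b c =
      ∑ b, A (n + 1) i b c * (A n j a b * ε (n + 1) b) :=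
    Finset.sum_congr rfl fun b _ => by ring
  rw [g1, g2]
  exact e3
end

section
/- A point z ∈ ℂ^d is a common zero of all polynomials in ℙ_n if and only if z is a generalized joint eigenvalue of the truncated Jacobi matrices J_{n,1},…,J_{n,d}, i.e., there is a nonzero ξ ∈ ℂ^{r_{n-1}} with J_{n,i} ξ = z_i 𝐒_n ξ for all i; moreover the joint eigenvector can be taken to be (ℙ_0(z)^T, …, ℙ_{n-1}(z)^T)^T. -/
open MvPolynomial Matrix Finset

/-- Index set for the truncated Jacobi matrix `J_n`: all multi-indices of degree `< n`. -/
abbrev JacIdx (d n : ℕ) := (k : Fin n) × ExactDeg d k.1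

private lemma eps_sq {d : ℕ} (ε : ∀ k : ℕ, ExactDeg d k → ℝ)
    (hsign : ∀ k a, ε k a = 1 ∨ ε k a = -1) (k : ℕ) (a : ExactDeg d k) :
    ε k a * ε k a = 1 := by rcases hsign k a with h | h <;> rw [h] <;> norm_num

lemma span_step (d k : ℕ)
    (P : ∀ k : ℕ, ExactDeg d k → MvPolynomial (Fin d) ℝ)
    (hdeg : ∀ (k : ℕ) (a : ExactDeg d k), (P k a).totalDegree = k)
    (hspan : ∀ (m : ℕ) (q : MvPolynomial (Fin d) ℝ), q.totalDegree ≤ m →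
      q ∈ Submodule.span ℝ {p | ∃ j, j ≤ m ∧ ∃ a : ExactDeg d j, p = P j a})
    (q : MvPolynomial (Fin d) ℝ) (hq : q.totalDegree ≤ k + 1) :
    q ∈ Submodule.span ℝ ({p | ∃ j, j ≤ k ∧ ∃ a : ExactDeg d j, p = P j a} ∪
      {p | ∃ (i : Fin d) (a : ExactDeg d k), p = X i * P k a}) := by
  set S1 : Set (MvPolynomial (Fin d) ℝ) := {p | ∃ j, j ≤ k ∧ ∃ a : ExactDeg d j, p = P j a} with hS1
  set S2 : Set (MvPolynomial (Fin d) ℝ) :=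
    {p | ∃ (i : Fin d) (a : ExactDeg d k), p = X i * P k a} with hS2
  set T := Submodule.span ℝ (S1 ∪ S2) with hT
  have hle : ∀ r : MvPolynomial (Fin d) ℝ, r.totalDegree ≤ k → r ∈ T := fun r hr =>
    Submodule.span_mono Set.subset_union_left (hspan k r hr)
  have hX : ∀ (i : Fin d) (r : MvPolynomial (Fin d) ℝ),
      r ∈ Submodule.span ℝ S1 → X i * r ∈ T := by
    intro i r hr
    induction hr using Submodule.span_induction with
    | mem p hp =>
      obtain ⟨j, hj, a, rfl⟩ := hp
      rcases eq_or_lt_of_le hj with rfl | hj'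
      · exact Submodule.subset_span (Or.inr ⟨i, a, rfl⟩)
      · refine hle _ ?_
        calc (X i * P j a).totalDegree
            ≤ (X i : MvPolynomial (Fin d) ℝ).totalDegree + (P j a).totalDegree :=
              totalDegree_mul _ _
          _ ≤ k := by rw [totalDegree_X, hdeg]; omega
    | zero => simpa using T.zero_mem
    | add x y _ _ hx hy => rw [mul_add]; exact T.add_mem hx hy
    | smul c x _ hx => rw [mul_smul_comm]; exact T.smul_mem c hx
  rw [q.as_sum]
  refine Submodule.sum_mem _ fun s hs => ?_
  have hsle : (s.sum fun _ e => e) ≤ k + 1 := le_trans (le_totalDegree hs) hq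
  rcases le_or_gt (s.sum fun _ e => e) k with h | h
  · exact hle _ (le_trans (totalDegree_monomial_le _ _) h)
  · have hsum : (s.sum fun _ e => e) = k + 1 := le_antisymm hsle h
    have hpos : ∃ i, s i ≠ 0 := by
      by_contra hc
      push_neg at hc
      have hs0 : s = 0 := Finsupp.ext fun i => hc i
      rw [hs0] at hsum
      simp at hsum
    obtain ⟨i, hi⟩ := hpos
    set s' : (Fin d) →₀ ℕ := s - Finsupp.single i 1 with hs'
    have hss : Finsupp.single i 1 + s' = s := by
      ext j
      simp only [Finsupp.add_apply, Finsupp.single_apply, hs', Finsupp.tsub_apply]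
      rcases eq_or_ne i j with rfl | hij
      · have := Nat.one_le_iff_ne_zero.mpr hi; simp; omega
      · simp [hij]
    have hs'sum : (s'.sum fun _ e => e) = k := by
      have hadd : ((Finsupp.single i 1 + s').sum fun _ e => e)
          = ((Finsupp.single i 1).sum fun _ e => e) + (s'.sum fun _ e => e) :=
        Finsupp.sum_add_index' (fun _ => rfl) (fun _ _ _ => rfl)
      rw [hss, hsum] at hadd
      rw [Finsupp.sum_single_index rfl] at hadd
      omega
    have hmono : (monomial s) (coeff s q) = X i * (monomial s') (coeff s q) := by
      rw [← hss, monomial_single_add, pow_one]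
    rw [hmono]
    exact hX i _ (hspan k _ (le_trans (totalDegree_monomial_le _ _) (le_of_eq hs'sum)))

private lemma L_comb {d : ℕ} (L : MvPolynomial (Fin d) ℝ →ₗ[ℝ] ℝ) {ι : Type*} [Fintype ι]
    (f : ι → ℝ) (g : ι → MvPolynomial (Fin d) ℝ) (Q : MvPolynomial (Fin d) ℝ) :
    L ((∑ x, f x • g x) * Q) = ∑ x, f x * L (g x * Q) := by
  rw [Finset.sum_mul, map_sum]
  exact Finset.sum_congr rfl fun x _ => by rw [smul_mul_assoc, LinearMap.map_smul, smul_eq_mul]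

lemma LXP {d : ℕ} (L : MvPolynomial (Fin d) ℝ →ₗ[ℝ] ℝ)
    (P : ∀ k : ℕ, ExactDeg d k → MvPolynomial (Fin d) ℝ)
    (ε : ∀ k : ℕ, ExactDeg d k → ℝ)
    (hsign : ∀ k a, ε k a = 1 ∨ ε k a = -1)
    (hortho : ∀ (k : ℕ) (a b : ExactDeg d k),
      L (P k a * P k b) = if a = b then ε k a else 0)
    (horthoNe : ∀ k m : ℕ, k ≠ m → ∀ (a : ExactDeg d k) (b : ExactDeg d m),
      L (P k a * P m b) = 0)
    (A : ∀ k : ℕ, Fin d → Matrix (ExactDeg d k) (ExactDeg d (k + 1)) ℝ)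
    (B : ∀ k : ℕ, Fin d → Matrix (ExactDeg d k) (ExactDeg d k) ℝ)
    (hrec0 : ∀ (i : Fin d) (a : ExactDeg d 0),
      X i * (ε 0 a • P 0 a) =
        (∑ c, A 0 i a c • P 1 c) + ∑ b, B 0 i a b • P 0 b)
    (hrecS : ∀ (m : ℕ) (i : Fin d) (a : ExactDeg d (m + 1)),
      X i * (ε (m + 1) a • P (m + 1) a) =
        (∑ c, A (m + 1) i a c • P (m + 2) c) + (∑ b, B (m + 1) i a b • P (m + 1) b)
          + ∑ b, A m i b a • P m b)
    (k : ℕ) (i : Fin d) (a : ExactDeg d k) (c : ExactDeg d (k + 1)) :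
    L (X i * P k a * P (k + 1) c) = ε k a * ε (k + 1) c * A k i a c := by
  have key : L ((X i * (ε k a • P k a)) * P (k + 1) c) = A k i a c * ε (k + 1) c := by
    cases k with
    | zero =>
      rw [hrec0 i a, add_mul, map_add, L_comb, L_comb]
      have h1 : ∑ c', A 0 i a c' * L (P 1 c' * P 1 c) = A 0 i a c * ε 1 c := by
        simp only [hortho]
        rw [Finset.sum_congr rfl (fun c' _ => ?_), Finset.sum_ite_eq' univ c
          (fun c' => A 0 i a c' * ε 1 c')]
        · simp
        · rcases eq_or_ne c' c with rfl | hne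
          · simp
          · simp [hne]
      have h2 : ∑ b, B 0 i a b * L (P 0 b * P 1 c) = 0 :=
        Finset.sum_eq_zero fun b _ => by rw [horthoNe 0 1 (by omega), mul_zero]
      rw [h1, h2, add_zero]
    | succ m =>
      rw [hrecS m i a, add_mul, add_mul, map_add, map_add, L_comb, L_comb, L_comb]
      have h1 : ∑ c', A (m + 1) i a c' * L (P (m + 2) c' * P (m + 2) c)
          = A (m + 1) i a c * ε (m + 2) c := by
        simp only [hortho]
        rw [Finset.sum_congr rfl (fun c' _ => ?_), Finset.sum_ite_eq' univ c
          (fun c' => A (m + 1) i a c' * ε (m + 2) c')]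
        · simp
        · rcases eq_or_ne c' c with rfl | hne
          · simp
          · simp [hne]
      have h2 : ∑ b, B (m + 1) i a b * L (P (m + 1) b * P (m + 2) c) = 0 :=
        Finset.sum_eq_zero fun b _ => by rw [horthoNe (m + 1) (m + 2) (by omega), mul_zero]
      have h3 : ∑ b, A m i b a * L (P m b * P (m + 2) c) = 0 :=
        Finset.sum_eq_zero fun b _ => by rw [horthoNe m (m + 2) (by omega), mul_zero]
      rw [h1, h2, h3, add_zero, add_zero]
  have hsm : X i * (ε k a • P k a) = ε k a • (X i * P k a) := mul_smul_comm _ _ _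
  rw [hsm, smul_mul_assoc, LinearMap.map_smul, smul_eq_mul] at key
  have hsq : ε k a * ε k a = 1 := by rcases hsign k a with h | h <;> rw [h] <;> norm_num
  calc L (X i * P k a * P (k + 1) c)
      = (ε k a * ε k a) * L (X i * P k a * P (k + 1) c) := by rw [hsq, one_mul]
    _ = ε k a * (ε k a * L ((X i * P k a) * P (k + 1) c)) := by ring_nf
    _ = ε k a * (A k i a c * ε (k + 1) c) := by rw [key]
    _ = ε k a * ε (k + 1) c * A k i a c := by ring
lemma injA_real {d : ℕ} (L : MvPolynomial (Fin d) ℝ →ₗ[ℝ] ℝ)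
    (P : ∀ k : ℕ, ExactDeg d k → MvPolynomial (Fin d) ℝ)
    (ε : ∀ k : ℕ, ExactDeg d k → ℝ)
    (hsign : ∀ k a, ε k a = 1 ∨ ε k a = -1)
    (hortho : ∀ (k : ℕ) (a b : ExactDeg d k),
      L (P k a * P k b) = if a = b then ε k a else 0)
    (horthoNe : ∀ k m : ℕ, k ≠ m → ∀ (a : ExactDeg d k) (b : ExactDeg d m),
      L (P k a * P m b) = 0)
    (hdeg : ∀ (k : ℕ) (a : ExactDeg d k), (P k a).totalDegree = k)
    (hspan : ∀ (m : ℕ) (q : MvPolynomial (Fin d) ℝ), q.totalDegree ≤ m →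
      q ∈ Submodule.span ℝ {p | ∃ j, j ≤ m ∧ ∃ a : ExactDeg d j, p = P j a})
    (A : ∀ k : ℕ, Fin d → Matrix (ExactDeg d k) (ExactDeg d (k + 1)) ℝ)
    (B : ∀ k : ℕ, Fin d → Matrix (ExactDeg d k) (ExactDeg d k) ℝ)
    (hrec0 : ∀ (i : Fin d) (a : ExactDeg d 0),
      X i * (ε 0 a • P 0 a) =
        (∑ c, A 0 i a c • P 1 c) + ∑ b, B 0 i a b • P 0 b)
    (hrecS : ∀ (m : ℕ) (i : Fin d) (a : ExactDeg d (m + 1)),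
      X i * (ε (m + 1) a • P (m + 1) a) =
        (∑ c, A (m + 1) i a c • P (m + 2) c) + (∑ b, B (m + 1) i a b • P (m + 1) b)
          + ∑ b, A m i b a • P m b)
    (k : ℕ) (v : ExactDeg d (k + 1) → ℝ)
    (hv : ∀ (i : Fin d) (a : ExactDeg d k), ∑ c, A k i a c * v c = 0) :
    ∀ c, v c = 0 := by
  set Q : MvPolynomial (Fin d) ℝ := ∑ c, (ε (k + 1) c * v c) • P (k + 1) c with hQdef
  have hmulQ : ∀ r : MvPolynomial (Fin d) ℝ,
      L (r * Q) = ∑ c, (ε (k + 1) c * v c) * L (r * P (k + 1) c) := by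
    intro r
    rw [hQdef, Finset.mul_sum, map_sum]
    exact Finset.sum_congr rfl fun c _ => by
      rw [mul_smul_comm, LinearMap.map_smul, smul_eq_mul]
  have hall : ∀ r ∈ Submodule.span ℝ
      ({p | ∃ j, j ≤ k ∧ ∃ a : ExactDeg d j, p = P j a} ∪
        {p | ∃ (i : Fin d) (a : ExactDeg d k), p = X i * P k a}), L (r * Q) = 0 := by
    intro r hr
    induction hr using Submodule.span_induction with
    | mem p hp =>
      rcases hp with hp | hp
      · obtain ⟨j, hj, a, rfl⟩ := hp
        rw [hmulQ]
        exact Finset.sum_eq_zero fun c _ => by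
          rw [horthoNe j (k + 1) (by omega), mul_zero]
      · obtain ⟨i, a, rfl⟩ := hp
        rw [hmulQ]
        have heach : ∀ c, (ε (k + 1) c * v c) * L (X i * P k a * P (k + 1) c)
            = ε k a * (A k i a c * v c) := by
          intro c
          rw [LXP L P ε hsign hortho horthoNe A B hrec0 hrecS]
          rcases hsign (k + 1) c with h | h <;> rw [h] <;> ring
        rw [Finset.sum_congr rfl fun c _ => heach c, ← Finset.mul_sum]
        rw [Finset.sum_congr rfl (fun c _ => rfl), hv i a, mul_zero]
    | zero => simp
    | add x y _ _ hx hy => rw [add_mul, map_add, hx, hy, add_zero]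
    | smul r x _ hx => rw [smul_mul_assoc, LinearMap.map_smul, hx, smul_zero]
  intro b
  have hb : L (P (k + 1) b * Q) = v b := by
    rw [hmulQ]
    have heach : ∀ c, (ε (k + 1) c * v c) * L (P (k + 1) b * P (k + 1) c)
        = if c = b then v b else 0 := by
      intro c
      rw [hortho]
      rcases eq_or_ne c b with rfl | hne
      · rw [if_pos rfl, if_pos rfl]
        rcases hsign (k + 1) c with h | h <;> rw [h] <;> ring
      · simp [hne, Ne.symm hne]
    rw [Finset.sum_congr rfl fun c _ => heach c, Finset.sum_ite_eq' univ b fun _ => v b]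
    simp
  rw [← hb]
  exact hall _ (span_step d k P hdeg hspan _ (le_of_eq (hdeg (k + 1) b)))

lemma injA_complex {d : ℕ} (L : MvPolynomial (Fin d) ℝ →ₗ[ℝ] ℝ)
    (P : ∀ k : ℕ, ExactDeg d k → MvPolynomial (Fin d) ℝ)
    (ε : ∀ k : ℕ, ExactDeg d k → ℝ)
    (hsign : ∀ k a, ε k a = 1 ∨ ε k a = -1)
    (hortho : ∀ (k : ℕ) (a b : ExactDeg d k),
      L (P k a * P k b) = if a = b then ε k a else 0)
    (horthoNe : ∀ k m : ℕ, k ≠ m → ∀ (a : ExactDeg d k) (b : ExactDeg d m),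
      L (P k a * P m b) = 0)
    (hdeg : ∀ (k : ℕ) (a : ExactDeg d k), (P k a).totalDegree = k)
    (hspan : ∀ (m : ℕ) (q : MvPolynomial (Fin d) ℝ), q.totalDegree ≤ m →
      q ∈ Submodule.span ℝ {p | ∃ j, j ≤ m ∧ ∃ a : ExactDeg d j, p = P j a})
    (A : ∀ k : ℕ, Fin d → Matrix (ExactDeg d k) (ExactDeg d (k + 1)) ℝ)
    (B : ∀ k : ℕ, Fin d → Matrix (ExactDeg d k) (ExactDeg d k) ℝ)
    (hrec0 : ∀ (i : Fin d) (a : ExactDeg d 0),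
      X i * (ε 0 a • P 0 a) =
        (∑ c, A 0 i a c • P 1 c) + ∑ b, B 0 i a b • P 0 b)
    (hrecS : ∀ (m : ℕ) (i : Fin d) (a : ExactDeg d (m + 1)),
      X i * (ε (m + 1) a • P (m + 1) a) =
        (∑ c, A (m + 1) i a c • P (m + 2) c) + (∑ b, B (m + 1) i a b • P (m + 1) b)
          + ∑ b, A m i b a • P m b)
    (k : ℕ) (v : ExactDeg d (k + 1) → ℂ)
    (hv : ∀ (i : Fin d) (a : ExactDeg d k), ∑ c, (A k i a c : ℂ) * v c = 0) :
    ∀ c, v c = 0 := by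
  have hre : ∀ (i : Fin d) (a : ExactDeg d k), ∑ c, A k i a c * (v c).re = 0 := by
    intro i a
    have h := congrArg Complex.re (hv i a)
    rw [Complex.re_sum] at h
    simpa [Complex.mul_re] using h
  have him : ∀ (i : Fin d) (a : ExactDeg d k), ∑ c, A k i a c * (v c).im = 0 := by
    intro i a
    have h := congrArg Complex.im (hv i a)
    rw [Complex.im_sum] at h
    simpa [Complex.mul_im] using h
  intro c
  have h1 := injA_real L P ε hsign hortho horthoNe hdeg hspan A B hrec0 hrecS k _ hre c
  have h2 := injA_real L P ε hsign hortho horthoNe hdeg hspan A B hrec0 hrecS k _ him c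
  exact Complex.ext h1 h2

section Rows

variable {d n : ℕ}
  (A : ∀ k : ℕ, Fin d → Matrix (ExactDeg d k) (ExactDeg d (k + 1)) ℝ)
  (B : ∀ k : ℕ, Fin d → Matrix (ExactDeg d k) (ExactDeg d k) ℝ)
  (J : Fin d → Matrix (JacIdx d n) (JacIdx d n) ℝ)

lemma sigma_expand (i : Fin d) (q : JacIdx d n) (ξ : JacIdx d n → ℂ) :
    ((J i).map (fun r => (r : ℂ)) *ᵥ ξ) q
      = ∑ l : Fin n, ∑ b : ExactDeg d l.1, ((J i q ⟨l, b⟩ : ℝ) : ℂ) * ξ ⟨l, b⟩ := by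
  show ∑ x : JacIdx d n, _ = _
  rw [← Finset.univ_sigma_univ, Finset.sum_sigma]
  rfl

lemma row0
    (hJdiag : ∀ (i : Fin d) (k : Fin n) (a b : ExactDeg d k.1),
      J i ⟨k, a⟩ ⟨k, b⟩ = B k.1 i a b)
    (hJup : ∀ (i : Fin d) (k : ℕ) (h1 : k < n) (h2 : k + 1 < n)
      (a : ExactDeg d k) (b : ExactDeg d (k + 1)),
      J i ⟨⟨k, h1⟩, a⟩ ⟨⟨k + 1, h2⟩, b⟩ = A k i a b)
    (hJ0 : ∀ (i : Fin d) (k l : Fin n) (a : ExactDeg d k.1) (b : ExactDeg d l.1),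
      (k : ℕ) ≠ l → (k : ℕ) + 1 ≠ l → (l : ℕ) + 1 ≠ k → J i ⟨k, a⟩ ⟨l, b⟩ = 0)
    (i : Fin d) (h0 : 0 < n) (a : ExactDeg d 0) (ξ : JacIdx d n → ℂ) :
    ((J i).map (fun r => (r : ℂ)) *ᵥ ξ) ⟨⟨0, h0⟩, a⟩ =
      (∑ b, (B 0 i a b : ℂ) * ξ ⟨⟨0, h0⟩, b⟩) +
        (if h1 : 1 < n then ∑ c, (A 0 i a c : ℂ) * ξ ⟨⟨1, h1⟩, c⟩ else 0) := by
  rw [sigma_expand]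
  by_cases h1 : 1 < n
  · rw [dif_pos h1]
    have hzero : ∀ l ∈ (univ : Finset (Fin n)),
        l ∉ ({⟨0, h0⟩, ⟨1, h1⟩} : Finset (Fin n)) →
        (∑ b : ExactDeg d l.1, ((J i ⟨⟨0, h0⟩, a⟩ ⟨l, b⟩ : ℝ) : ℂ) * ξ ⟨l, b⟩) = 0 := by
      intro l _ hl
      simp only [Finset.mem_insert, Finset.mem_singleton] at hl
      push_neg at hl
      obtain ⟨hl0, hl1⟩ := hl
      refine Finset.sum_eq_zero fun b _ => ?_
      rw [hJ0 i ⟨0, h0⟩ l a b ?_ ?_ ?_]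
      · simp
      · exact fun h => hl0 (Fin.ext h.symm)
      · exact fun h => hl1 (Fin.ext (by simpa using h.symm))
      · simp only [Fin.val_mk]; omega
    rw [← Finset.sum_subset (Finset.subset_univ _) hzero]
    rw [Finset.sum_pair (by simp [Fin.ext_iff])]
    congr 1
    · exact Finset.sum_congr rfl fun b _ => by rw [hJdiag i ⟨0, h0⟩ a b]
    · exact Finset.sum_congr rfl fun b _ => by rw [hJup i 0 h0 h1 a b]
  · rw [dif_neg h1]
    have hzero : ∀ l ∈ (univ : Finset (Fin n)),
        l ∉ ({⟨0, h0⟩} : Finset (Fin n)) →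
        (∑ b : ExactDeg d l.1, ((J i ⟨⟨0, h0⟩, a⟩ ⟨l, b⟩ : ℝ) : ℂ) * ξ ⟨l, b⟩) = 0 := by
      intro l _ hl
      simp only [Finset.mem_singleton] at hl
      exfalso
      exact hl (Fin.ext (by omega))
    rw [← Finset.sum_subset (Finset.subset_univ _) hzero]
    rw [Finset.sum_singleton]
    rw [add_zero]
    exact Finset.sum_congr rfl fun b _ => by rw [hJdiag i ⟨0, h0⟩ a b]

lemma rowS
    (hJdiag : ∀ (i : Fin d) (k : Fin n) (a b : ExactDeg d k.1),
      J i ⟨k, a⟩ ⟨k, b⟩ = B k.1 i a b)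
    (hJup : ∀ (i : Fin d) (k : ℕ) (h1 : k < n) (h2 : k + 1 < n)
      (a : ExactDeg d k) (b : ExactDeg d (k + 1)),
      J i ⟨⟨k, h1⟩, a⟩ ⟨⟨k + 1, h2⟩, b⟩ = A k i a b)
    (hJlow : ∀ (i : Fin d) (k : ℕ) (h1 : k < n) (h2 : k + 1 < n)
      (a : ExactDeg d k) (b : ExactDeg d (k + 1)),
      J i ⟨⟨k + 1, h2⟩, b⟩ ⟨⟨k, h1⟩, a⟩ = A k i a b)
    (hJ0 : ∀ (i : Fin d) (k l : Fin n) (a : ExactDeg d k.1) (b : ExactDeg d l.1),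
      (k : ℕ) ≠ l → (k : ℕ) + 1 ≠ l → (l : ℕ) + 1 ≠ k → J i ⟨k, a⟩ ⟨l, b⟩ = 0)
    (i : Fin d) (k : ℕ) (hk1 : k + 1 < n) (a : ExactDeg d (k + 1)) (ξ : JacIdx d n → ℂ) :
    ((J i).map (fun r => (r : ℂ)) *ᵥ ξ) ⟨⟨k + 1, hk1⟩, a⟩ =
      (∑ b, (B (k + 1) i a b : ℂ) * ξ ⟨⟨k + 1, hk1⟩, b⟩) +
        (if h2 : k + 2 < n then ∑ c, (A (k + 1) i a c : ℂ) * ξ ⟨⟨k + 2, h2⟩, c⟩ else 0) +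
        (∑ b, (A k i b a : ℂ) * ξ ⟨⟨k, by omega⟩, b⟩) := by
  have hkn : k < n := by omega
  rw [sigma_expand]
  have hdiag : (∑ b : ExactDeg d (k + 1), ((J i ⟨⟨k + 1, hk1⟩, a⟩ ⟨⟨k + 1, hk1⟩, b⟩ : ℝ) : ℂ)
      * ξ ⟨⟨k + 1, hk1⟩, b⟩) = ∑ b, (B (k + 1) i a b : ℂ) * ξ ⟨⟨k + 1, hk1⟩, b⟩ :=
    Finset.sum_congr rfl fun b _ => by rw [hJdiag i ⟨k + 1, hk1⟩ a b]
  have hlow : (∑ b : ExactDeg d k, ((J i ⟨⟨k + 1, hk1⟩, a⟩ ⟨⟨k, hkn⟩, b⟩ : ℝ) : ℂ)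
      * ξ ⟨⟨k, hkn⟩, b⟩) = ∑ b, (A k i b a : ℂ) * ξ ⟨⟨k, by omega⟩, b⟩ :=
    Finset.sum_congr rfl fun b _ => by rw [hJlow i k hkn hk1 b a]
  by_cases h2 : k + 2 < n
  · rw [dif_pos h2]
    have hzero : ∀ l ∈ (univ : Finset (Fin n)),
        l ∉ ({⟨k, hkn⟩, ⟨k + 1, hk1⟩, ⟨k + 2, h2⟩} : Finset (Fin n)) →
        (∑ b : ExactDeg d l.1, ((J i ⟨⟨k + 1, hk1⟩, a⟩ ⟨l, b⟩ : ℝ) : ℂ) * ξ ⟨l, b⟩) = 0 := by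
      intro l _ hl
      simp only [Finset.mem_insert, Finset.mem_singleton, Fin.ext_iff] at hl
      push_neg at hl
      refine Finset.sum_eq_zero fun b _ => ?_
      rw [hJ0 i ⟨k + 1, hk1⟩ l a b (by simp only [Fin.val_mk]; omega) (by simp only [Fin.val_mk]; omega) (by simp only [Fin.val_mk]; omega)]
      simp
    rw [← Finset.sum_subset (Finset.subset_univ _) hzero]
    rw [Finset.sum_insert (by simp [Fin.ext_iff]), Finset.sum_pair (by simp [Fin.ext_iff])]
    have hup : (∑ b : ExactDeg d (k + 2), ((J i ⟨⟨k + 1, hk1⟩, a⟩ ⟨⟨k + 2, h2⟩, b⟩ : ℝ) : ℂ)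
        * ξ ⟨⟨k + 2, h2⟩, b⟩) = ∑ c, (A (k + 1) i a c : ℂ) * ξ ⟨⟨k + 2, h2⟩, c⟩ :=
      Finset.sum_congr rfl fun b _ => by rw [hJup i (k + 1) hk1 h2 a b]
    rw [hdiag, hlow, hup]
    ring
  · rw [dif_neg h2]
    have hzero : ∀ l ∈ (univ : Finset (Fin n)),
        l ∉ ({⟨k, hkn⟩, ⟨k + 1, hk1⟩} : Finset (Fin n)) →
        (∑ b : ExactDeg d l.1, ((J i ⟨⟨k + 1, hk1⟩, a⟩ ⟨l, b⟩ : ℝ) : ℂ) * ξ ⟨l, b⟩) = 0 := by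
      intro l _ hl
      simp only [Finset.mem_insert, Finset.mem_singleton, Fin.ext_iff] at hl
      push_neg at hl
      refine Finset.sum_eq_zero fun b _ => ?_
      have hlval : (l : ℕ) < n := l.2
      rw [hJ0 i ⟨k + 1, hk1⟩ l a b (by simp only [Fin.val_mk]; omega) (by simp only [Fin.val_mk]; omega) (by simp only [Fin.val_mk]; omega)]
      simp
    rw [← Finset.sum_subset (Finset.subset_univ _) hzero]
    rw [Finset.sum_pair (by simp [Fin.ext_iff])]
    rw [hdiag, hlow]
    ring

end Rows

lemma recC0 {d : ℕ}
    (P : ∀ k : ℕ, ExactDeg d k → MvPolynomial (Fin d) ℝ)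
    (ε : ∀ k : ℕ, ExactDeg d k → ℝ)
    (A : ∀ k : ℕ, Fin d → Matrix (ExactDeg d k) (ExactDeg d (k + 1)) ℝ)
    (B : ∀ k : ℕ, Fin d → Matrix (ExactDeg d k) (ExactDeg d k) ℝ)
    (hrec0 : ∀ (i : Fin d) (a : ExactDeg d 0),
      X i * (ε 0 a • P 0 a) =
        (∑ c, A 0 i a c • P 1 c) + ∑ b, B 0 i a b • P 0 b)
    (z : Fin d → ℂ) (i : Fin d) (a : ExactDeg d 0) :
    z i * ((ε 0 a : ℂ) * aeval z (P 0 a)) =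
      (∑ c, (A 0 i a c : ℂ) * aeval z (P 1 c)) +
        ∑ b, (B 0 i a b : ℂ) * aeval z (P 0 b) := by
  have h := congrArg (aeval z) (hrec0 i a)
  simpa [map_sum, Algebra.smul_def, algebraMap_eq, mul_comm, mul_assoc, mul_left_comm]
    using h

lemma recCS {d : ℕ}
    (P : ∀ k : ℕ, ExactDeg d k → MvPolynomial (Fin d) ℝ)
    (ε : ∀ k : ℕ, ExactDeg d k → ℝ)
    (A : ∀ k : ℕ, Fin d → Matrix (ExactDeg d k) (ExactDeg d (k + 1)) ℝ)
    (B : ∀ k : ℕ, Fin d → Matrix (ExactDeg d k) (ExactDeg d k) ℝ)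
    (hrecS : ∀ (m : ℕ) (i : Fin d) (a : ExactDeg d (m + 1)),
      X i * (ε (m + 1) a • P (m + 1) a) =
        (∑ c, A (m + 1) i a c • P (m + 2) c) + (∑ b, B (m + 1) i a b • P (m + 1) b)
          + ∑ b, A m i b a • P m b)
    (z : Fin d → ℂ) (m : ℕ) (i : Fin d) (a : ExactDeg d (m + 1)) :
    z i * ((ε (m + 1) a : ℂ) * aeval z (P (m + 1) a)) =
      (∑ c, (A (m + 1) i a c : ℂ) * aeval z (P (m + 2) c)) +
        (∑ b, (B (m + 1) i a b : ℂ) * aeval z (P (m + 1) b)) +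
        ∑ b, (A m i b a : ℂ) * aeval z (P m b) := by
  have h := congrArg (aeval z) (hrecS m i a)
  simpa [map_sum, Algebra.smul_def, algebraMap_eq, mul_comm, mul_assoc, mul_left_comm]
    using h

lemma forwardEig {d n : ℕ}
    (P : ∀ k : ℕ, ExactDeg d k → MvPolynomial (Fin d) ℝ)
    (ε : ∀ k : ℕ, ExactDeg d k → ℝ)
    (A : ∀ k : ℕ, Fin d → Matrix (ExactDeg d k) (ExactDeg d (k + 1)) ℝ)
    (B : ∀ k : ℕ, Fin d → Matrix (ExactDeg d k) (ExactDeg d k) ℝ)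
    (hrec0 : ∀ (i : Fin d) (a : ExactDeg d 0),
      X i * (ε 0 a • P 0 a) =
        (∑ c, A 0 i a c • P 1 c) + ∑ b, B 0 i a b • P 0 b)
    (hrecS : ∀ (m : ℕ) (i : Fin d) (a : ExactDeg d (m + 1)),
      X i * (ε (m + 1) a • P (m + 1) a) =
        (∑ c, A (m + 1) i a c • P (m + 2) c) + (∑ b, B (m + 1) i a b • P (m + 1) b)
          + ∑ b, A m i b a • P m b)
    (J : Fin d → Matrix (JacIdx d n) (JacIdx d n) ℝ)
    (hJdiag : ∀ (i : Fin d) (k : Fin n) (a b : ExactDeg d k.1),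
      J i ⟨k, a⟩ ⟨k, b⟩ = B k.1 i a b)
    (hJup : ∀ (i : Fin d) (k : ℕ) (h1 : k < n) (h2 : k + 1 < n)
      (a : ExactDeg d k) (b : ExactDeg d (k + 1)),
      J i ⟨⟨k, h1⟩, a⟩ ⟨⟨k + 1, h2⟩, b⟩ = A k i a b)
    (hJlow : ∀ (i : Fin d) (k : ℕ) (h1 : k < n) (h2 : k + 1 < n)
      (a : ExactDeg d k) (b : ExactDeg d (k + 1)),
      J i ⟨⟨k + 1, h2⟩, b⟩ ⟨⟨k, h1⟩, a⟩ = A k i a b)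
    (hJ0 : ∀ (i : Fin d) (k l : Fin n) (a : ExactDeg d k.1) (b : ExactDeg d l.1),
      (k : ℕ) ≠ l → (k : ℕ) + 1 ≠ l → (l : ℕ) + 1 ≠ k → J i ⟨k, a⟩ ⟨l, b⟩ = 0)
    (z : Fin d → ℂ) (hz : ∀ a : ExactDeg d n, aeval z (P n a) = 0) (i : Fin d) :
    (J i).map (fun r => (r : ℂ)) *ᵥ (fun p : JacIdx d n => aeval z (P p.1.1 p.2)) =
      z i • ((Matrix.diagonal fun p : JacIdx d n => ε p.1.1 p.2).map
        (fun r => (r : ℂ)) *ᵥ fun p : JacIdx d n => aeval z (P p.1.1 p.2)) := by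
  have hd : ((Matrix.diagonal fun p : JacIdx d n => ε p.1.1 p.2).map (fun r => (r : ℂ)))
      = Matrix.diagonal (fun p : JacIdx d n => ((ε p.1.1 p.2 : ℝ) : ℂ)) :=
    Matrix.diagonal_map (by simp)
  funext q
  obtain ⟨⟨k, hk⟩, a⟩ := q
  rw [hd, Pi.smul_apply, Matrix.mulVec_diagonal, smul_eq_mul]
  cases k with
  | zero =>
    rw [row0 A B J hJdiag hJup hJ0 i hk a _]
    by_cases h1 : 1 < n
    · rw [dif_pos h1]
      have hr := recC0 P ε A B hrec0 z i a
      simp only []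
      rw [hr]
      ring
    · rw [dif_neg h1]
      have hn1 : n = 1 := by omega
      subst hn1
      have hr := recC0 P ε A B hrec0 z i a
      simp only [hz] at hr
      simp only []
      rw [hr]
      simp
  | succ m =>
    rw [rowS A B J hJdiag hJup hJlow hJ0 i m hk a _]
    by_cases h2 : m + 2 < n
    · rw [dif_pos h2]
      have hr := recCS P ε A B hrecS z m i a
      simp only []
      rw [hr]
      ring
    · rw [dif_neg h2]
      have hn2 : n = m + 2 := by omega
      subst hn2
      have hr := recCS P ε A B hrecS z m i a
      simp only [hz] at hr
      simp only []
      rw [hr]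
      simp

lemma aeval_P0_ne_zero {d : ℕ} (L : MvPolynomial (Fin d) ℝ →ₗ[ℝ] ℝ)
    (P : ∀ k : ℕ, ExactDeg d k → MvPolynomial (Fin d) ℝ)
    (ε : ∀ k : ℕ, ExactDeg d k → ℝ)
    (hsign : ∀ k a, ε k a = 1 ∨ ε k a = -1)
    (hortho : ∀ (k : ℕ) (a b : ExactDeg d k),
      L (P k a * P k b) = if a = b then ε k a else 0)
    (hdeg : ∀ (k : ℕ) (a : ExactDeg d k), (P k a).totalDegree = k)
    (z : Fin d → ℂ) (a0 : ExactDeg d 0) :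
    aeval z (P 0 a0) ≠ 0 := by
  have hC : P 0 a0 = C (coeff 0 (P 0 a0)) := by
    ext m
    rcases eq_or_ne m 0 with rfl | hm
    · simp
    · rw [coeff_C, if_neg (by exact fun h => hm h.symm)]
      by_contra hne
      have hmem : m ∈ (P 0 a0).support := by rwa [MvPolynomial.mem_support_iff]
      have h0 := (totalDegree_eq_zero_iff _ _).mp (hdeg 0 a0) m hmem
      exact hm (Finsupp.ext fun x => h0 x)
  have hP0 : P 0 a0 ≠ 0 := by
    intro h
    have := hortho 0 a0 a0
    rw [h, mul_zero, map_zero, if_pos rfl] at this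
    rcases hsign 0 a0 with hs | hs <;> rw [hs] at this <;> norm_num at this
  have hc0 : coeff 0 (P 0 a0) ≠ 0 := fun h => hP0 (by rw [hC, h, map_zero])
  rw [hC]
  simp [hc0]

lemma backwardEig {d n : ℕ} (hn : 0 < n)
    (L : MvPolynomial (Fin d) ℝ →ₗ[ℝ] ℝ)
    (P : ∀ k : ℕ, ExactDeg d k → MvPolynomial (Fin d) ℝ)
    (ε : ∀ k : ℕ, ExactDeg d k → ℝ)
    (hsign : ∀ k a, ε k a = 1 ∨ ε k a = -1)
    (hortho : ∀ (k : ℕ) (a b : ExactDeg d k),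
      L (P k a * P k b) = if a = b then ε k a else 0)
    (horthoNe : ∀ k m : ℕ, k ≠ m → ∀ (a : ExactDeg d k) (b : ExactDeg d m),
      L (P k a * P m b) = 0)
    (hdeg : ∀ (k : ℕ) (a : ExactDeg d k), (P k a).totalDegree = k)
    (hspan : ∀ (m : ℕ) (q : MvPolynomial (Fin d) ℝ), q.totalDegree ≤ m →
      q ∈ Submodule.span ℝ {p | ∃ j, j ≤ m ∧ ∃ a : ExactDeg d j, p = P j a})
    (A : ∀ k : ℕ, Fin d → Matrix (ExactDeg d k) (ExactDeg d (k + 1)) ℝ)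
    (B : ∀ k : ℕ, Fin d → Matrix (ExactDeg d k) (ExactDeg d k) ℝ)
    (hrec0 : ∀ (i : Fin d) (a : ExactDeg d 0),
      X i * (ε 0 a • P 0 a) =
        (∑ c, A 0 i a c • P 1 c) + ∑ b, B 0 i a b • P 0 b)
    (hrecS : ∀ (m : ℕ) (i : Fin d) (a : ExactDeg d (m + 1)),
      X i * (ε (m + 1) a • P (m + 1) a) =
        (∑ c, A (m + 1) i a c • P (m + 2) c) + (∑ b, B (m + 1) i a b • P (m + 1) b)
          + ∑ b, A m i b a • P m b)
    (J : Fin d → Matrix (JacIdx d n) (JacIdx d n) ℝ)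
    (hJdiag : ∀ (i : Fin d) (k : Fin n) (a b : ExactDeg d k.1),
      J i ⟨k, a⟩ ⟨k, b⟩ = B k.1 i a b)
    (hJup : ∀ (i : Fin d) (k : ℕ) (h1 : k < n) (h2 : k + 1 < n)
      (a : ExactDeg d k) (b : ExactDeg d (k + 1)),
      J i ⟨⟨k, h1⟩, a⟩ ⟨⟨k + 1, h2⟩, b⟩ = A k i a b)
    (hJlow : ∀ (i : Fin d) (k : ℕ) (h1 : k < n) (h2 : k + 1 < n)
      (a : ExactDeg d k) (b : ExactDeg d (k + 1)),
      J i ⟨⟨k + 1, h2⟩, b⟩ ⟨⟨k, h1⟩, a⟩ = A k i a b)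
    (hJ0 : ∀ (i : Fin d) (k l : Fin n) (a : ExactDeg d k.1) (b : ExactDeg d l.1),
      (k : ℕ) ≠ l → (k : ℕ) + 1 ≠ l → (l : ℕ) + 1 ≠ k → J i ⟨k, a⟩ ⟨l, b⟩ = 0)
    (z : Fin d → ℂ) (ξ : JacIdx d n → ℂ) (hξ : ξ ≠ 0)
    (heig : ∀ i : Fin d, (J i).map (fun r => (r : ℂ)) *ᵥ ξ =
      z i • ((Matrix.diagonal fun p : JacIdx d n => ε p.1.1 p.2).map
        (fun r => (r : ℂ)) *ᵥ ξ)) :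
    ∀ a : ExactDeg d n, aeval z (P n a) = 0 := by
  have hd : ((Matrix.diagonal fun p : JacIdx d n => ε p.1.1 p.2).map (fun r => (r : ℂ)))
      = Matrix.diagonal (fun p : JacIdx d n => ((ε p.1.1 p.2 : ℝ) : ℂ)) :=
    Matrix.diagonal_map (by simp)
  have heig' : ∀ (i : Fin d) (q : JacIdx d n),
      ((J i).map (fun r => (r : ℂ)) *ᵥ ξ) q = z i * ((ε q.1.1 q.2 : ℂ) * ξ q) := by
    intro i q
    rw [heig i, hd, Pi.smul_apply, Matrix.mulVec_diagonal, smul_eq_mul]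
  set a0 : ExactDeg d 0 := ⟨fun _ => 0, by simp⟩ with ha0
  have hss : ∀ b : ExactDeg d 0, b = a0 := by
    intro b
    refine Subtype.ext (funext fun i => ?_)
    rw [Fin.eq_zero (b.1 i)]
  have hp0 : aeval z (P 0 a0) ≠ 0 := aeval_P0_ne_zero L P ε hsign hortho hdeg z a0
  set c : ℂ := ξ ⟨⟨0, hn⟩, a0⟩ / aeval z (P 0 a0) with hc
  have key : ∀ (k : ℕ) (hk : k < n) (b : ExactDeg d k),
      ξ ⟨⟨k, hk⟩, b⟩ = c * aeval z (P k b) := by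
    intro k
    induction k using Nat.strong_induction_on with
    | _ k IH =>
      match k with
      | 0 =>
        intro hk b
        rw [hss b]
        show ξ ⟨⟨0, hn⟩, a0⟩ = c * aeval z (P 0 a0)
        rw [hc]
        exact (div_mul_cancel₀ _ hp0).symm
      | (j + 1) =>
        intro hk b
        have hmain : ∀ c' : ExactDeg d (j + 1),
            (fun c' => ξ ⟨⟨j + 1, hk⟩, c'⟩ - c * aeval z (P (j + 1) c')) c' = 0 := by
          apply injA_complex L P ε hsign hortho horthoNe hdeg hspan A B hrec0 hrecS j
          intro i a
          have hgoal : ∀ (Sξ Sp : ℂ), Sξ = c * Sp →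
              ∑ c', (A j i a c' : ℂ) * (ξ ⟨⟨j + 1, hk⟩, c'⟩ - c * aeval z (P (j + 1) c')) =
                (∑ c', (A j i a c' : ℂ) * ξ ⟨⟨j + 1, hk⟩, c'⟩) -
                  c * ∑ c', (A j i a c' : ℂ) * aeval z (P (j + 1) c') := by
            intro _ _ _
            rw [Finset.mul_sum, ← Finset.sum_sub_distrib]
            exact Finset.sum_congr rfl fun c' _ => by ring
          rw [hgoal 0 0 (by ring)]
          match j with
          | 0 =>
            have hj : 0 < n := by omega
            have hrow := row0 A B J hJdiag hJup hJ0 i hj a ξ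
            rw [heig' i ⟨⟨0, hj⟩, a⟩, dif_pos hk] at hrow
            have hBsub : ∑ b', (B 0 i a b' : ℂ) * ξ ⟨⟨0, hj⟩, b'⟩
                = c * ∑ b', (B 0 i a b' : ℂ) * aeval z (P 0 b') := by
              rw [Finset.mul_sum]
              exact Finset.sum_congr rfl fun b' _ => by
                rw [IH 0 (by omega) hj b']; ring
            have hself : ξ ⟨⟨0, hj⟩, a⟩ = c * aeval z (P 0 a) := IH 0 (by omega) hj a
            rw [hBsub, hself] at hrow
            have hrec := recC0 P ε A B hrec0 z i a
            linear_combination c * hrec - hrow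
          | (m + 1) =>
            have hm1 : m + 1 < n := by omega
            have hrow := rowS A B J hJdiag hJup hJlow hJ0 i m hm1 a ξ
            rw [heig' i ⟨⟨m + 1, hm1⟩, a⟩, dif_pos hk] at hrow
            have hBsub : ∑ b', (B (m + 1) i a b' : ℂ) * ξ ⟨⟨m + 1, hm1⟩, b'⟩
                = c * ∑ b', (B (m + 1) i a b' : ℂ) * aeval z (P (m + 1) b') := by
              rw [Finset.mul_sum]
              exact Finset.sum_congr rfl fun b' _ => by
                rw [IH (m + 1) (by omega) hm1 b']; ring
            have hLsub : ∑ b', (A m i b' a : ℂ) * ξ ⟨⟨m, by omega⟩, b'⟩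
                = c * ∑ b', (A m i b' a : ℂ) * aeval z (P m b') := by
              rw [Finset.mul_sum]
              exact Finset.sum_congr rfl fun b' _ => by
                rw [IH m (by omega) (by omega) b']; ring
            have hself : ξ ⟨⟨m + 1, hm1⟩, a⟩ = c * aeval z (P (m + 1) a) :=
              IH (m + 1) (by omega) hm1 a
            rw [hBsub, hLsub, hself] at hrow
            have hrec := recCS P ε A B hrecS z m i a
            linear_combination c * hrec - hrow
        have := hmain b
        simpa [sub_eq_zero] using this
  have hcne : c ≠ 0 := by
    intro hc0
    apply hξ
    funext q
    obtain ⟨⟨k, hk⟩, b⟩ := q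
    rw [key k hk b, hc0, zero_mul, Pi.zero_apply]
  obtain ⟨m, rfl⟩ : ∃ m, n = m + 1 := ⟨n - 1, by omega⟩
  have htop : ∀ (i : Fin d) (a : ExactDeg d m),
      ∑ c', (A m i a c' : ℂ) * aeval z (P (m + 1) c') = 0 := by
    intro i a
    match m with
    | 0 =>
      have hrow := row0 A B J hJdiag hJup hJ0 i hn a ξ
      rw [heig' i ⟨⟨0, hn⟩, a⟩, dif_neg (by omega)] at hrow
      have hBsub : ∑ b', (B 0 i a b' : ℂ) * ξ ⟨⟨0, hn⟩, b'⟩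
          = c * ∑ b', (B 0 i a b' : ℂ) * aeval z (P 0 b') := by
        rw [Finset.mul_sum]
        exact Finset.sum_congr rfl fun b' _ => by rw [key 0 hn b']; ring
      rw [hBsub, key 0 hn a] at hrow
      have hrec := recC0 P ε A B hrec0 z i a
      have hc2 : c * ∑ c', (A 0 i a c' : ℂ) * aeval z (P 1 c') = 0 := by
        linear_combination hrow - c * hrec
      rcases mul_eq_zero.mp hc2 with h | h
      · exact absurd h hcne
      · exact h
    | (m' + 1) =>
      have hm1 : m' + 1 < m' + 2 := by omega
      have hrow := rowS A B J hJdiag hJup hJlow hJ0 i m' hm1 a ξ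
      rw [heig' i ⟨⟨m' + 1, hm1⟩, a⟩, dif_neg (by omega)] at hrow
      have hBsub : ∑ b', (B (m' + 1) i a b' : ℂ) * ξ ⟨⟨m' + 1, hm1⟩, b'⟩
          = c * ∑ b', (B (m' + 1) i a b' : ℂ) * aeval z (P (m' + 1) b') := by
        rw [Finset.mul_sum]
        exact Finset.sum_congr rfl fun b' _ => by rw [key (m' + 1) hm1 b']; ring
      have hLsub : ∑ b', (A m' i b' a : ℂ) * ξ ⟨⟨m', by omega⟩, b'⟩
          = c * ∑ b', (A m' i b' a : ℂ) * aeval z (P m' b') := by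
        rw [Finset.mul_sum]
        exact Finset.sum_congr rfl fun b' _ => by rw [key m' (by omega) b']; ring
      rw [hBsub, hLsub, key (m' + 1) hm1 a] at hrow
      have hrec := recCS P ε A B hrecS z m' i a
      have hc2 : c * ∑ c', (A (m' + 1) i a c' : ℂ) * aeval z (P (m' + 2) c') = 0 := by
        linear_combination hrow - c * hrec
      rcases mul_eq_zero.mp hc2 with h | h
      · exact absurd h hcne
      · exact h
  exact injA_complex L P ε hsign hortho horthoNe hdeg hspan A B hrec0 hrecS m
    (fun c' => aeval z (P (m + 1) c')) htop


/-- A point `z ∈ ℂ^d` is a common zero of the sign-orthonormal vector `ℙ_n` if and only if it is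
a generalized joint eigenvalue of the truncated Jacobi matrices `J_{n,1},…,J_{n,d}` (with respect
to the block-diagonal signature matrix `𝐒_n`); moreover the joint eigenvector may be taken to be
`(ℙ_0(z)ᵀ,…,ℙ_{n-1}(z)ᵀ)ᵀ`. -/
theorem common_zero_iff_joint_eigenvalue
    (d n : ℕ) (hn : 0 < n)
    (L : MvPolynomial (Fin d) ℝ →ₗ[ℝ] ℝ)
    (P : ∀ k : ℕ, ExactDeg d k → MvPolynomial (Fin d) ℝ)
    (ε : ∀ k : ℕ, ExactDeg d k → ℝ)
    (hsign : ∀ k a, ε k a = 1 ∨ ε k a = -1)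
    (hortho : ∀ (k : ℕ) (a b : ExactDeg d k),
      L (P k a * P k b) = if a = b then ε k a else 0)
    (horthoNe : ∀ k m : ℕ, k ≠ m → ∀ (a : ExactDeg d k) (b : ExactDeg d m),
      L (P k a * P m b) = 0)
    (hdeg : ∀ (k : ℕ) (a : ExactDeg d k), (P k a).totalDegree = k)
    (hspan : ∀ (m : ℕ) (q : MvPolynomial (Fin d) ℝ), q.totalDegree ≤ m →
      q ∈ Submodule.span ℝ {p | ∃ k, k ≤ m ∧ ∃ a : ExactDeg d k, p = P k a})
    (A : ∀ k : ℕ, Fin d → Matrix (ExactDeg d k) (ExactDeg d (k + 1)) ℝ)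
    (B : ∀ k : ℕ, Fin d → Matrix (ExactDeg d k) (ExactDeg d k) ℝ)
    (hrec0 : ∀ (i : Fin d) (a : ExactDeg d 0),
      X i * (ε 0 a • P 0 a) =
        (∑ c, A 0 i a c • P 1 c) + ∑ b, B 0 i a b • P 0 b)
    (hrecS : ∀ (m : ℕ) (i : Fin d) (a : ExactDeg d (m + 1)),
      X i * (ε (m + 1) a • P (m + 1) a) =
        (∑ c, A (m + 1) i a c • P (m + 2) c) + (∑ b, B (m + 1) i a b • P (m + 1) b)
          + ∑ b, A m i b a • P m b)
    (J : Fin d → Matrix (JacIdx d n) (JacIdx d n) ℝ)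
    (hJdiag : ∀ (i : Fin d) (k : Fin n) (a b : ExactDeg d k.1),
      J i ⟨k, a⟩ ⟨k, b⟩ = B k.1 i a b)
    (hJup : ∀ (i : Fin d) (k : ℕ) (h1 : k < n) (h2 : k + 1 < n)
      (a : ExactDeg d k) (b : ExactDeg d (k + 1)),
      J i ⟨⟨k, h1⟩, a⟩ ⟨⟨k + 1, h2⟩, b⟩ = A k i a b)
    (hJlow : ∀ (i : Fin d) (k : ℕ) (h1 : k < n) (h2 : k + 1 < n)
      (a : ExactDeg d k) (b : ExactDeg d (k + 1)),
      J i ⟨⟨k + 1, h2⟩, b⟩ ⟨⟨k, h1⟩, a⟩ = A k i a b)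
    (hJ0 : ∀ (i : Fin d) (k l : Fin n) (a : ExactDeg d k.1) (b : ExactDeg d l.1),
      (k : ℕ) ≠ l → (k : ℕ) + 1 ≠ l → (l : ℕ) + 1 ≠ k → J i ⟨k, a⟩ ⟨l, b⟩ = 0) :
    (∀ z : Fin d → ℂ,
      (∀ a : ExactDeg d n, aeval z (P n a) = 0) ↔
        ∃ ξ : JacIdx d n → ℂ, ξ ≠ 0 ∧ ∀ i : Fin d,
          (J i).map (fun r => (r : ℂ)) *ᵥ ξ =
            z i • ((Matrix.diagonal fun p : JacIdx d n => ε p.1.1 p.2).map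
              (fun r => (r : ℂ)) *ᵥ ξ)) ∧
    (∀ z : Fin d → ℂ, (∀ a : ExactDeg d n, aeval z (P n a) = 0) →
      (fun p : JacIdx d n => aeval z (P p.1.1 p.2)) ≠ 0 ∧
      ∀ i : Fin d,
        (J i).map (fun r => (r : ℂ)) *ᵥ (fun p : JacIdx d n => aeval z (P p.1.1 p.2)) =
          z i • ((Matrix.diagonal fun p : JacIdx d n => ε p.1.1 p.2).map
            (fun r => (r : ℂ)) *ᵥ fun p : JacIdx d n => aeval z (P p.1.1 p.2))) := by
  have a0 : ExactDeg d 0 := ⟨fun _ => 0, by simp⟩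
  constructor
  · intro z
    constructor
    · intro hz
      refine ⟨fun p : JacIdx d n => aeval z (P p.1.1 p.2), ?_, ?_⟩
      · intro h
        have h0 := congrFun h ⟨⟨0, hn⟩, a0⟩
        exact aeval_P0_ne_zero L P ε hsign hortho hdeg z a0 h0
      · exact forwardEig P ε A B hrec0 hrecS J hJdiag hJup hJlow hJ0 z hz
    · rintro ⟨ξ, hξ, heig⟩
      exact backwardEig hn L P ε hsign hortho horthoNe hdeg hspan A B hrec0 hrecS J
        hJdiag hJup hJlow hJ0 z ξ hξ heig
  · intro z hz
    refine ⟨?_, forwardEig P ε A B hrec0 hrecS J hJdiag hJup hJlow hJ0 z hz⟩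
    intro h
    have h0 := congrFun h ⟨⟨0, hn⟩, a0⟩
    exact aeval_P0_ne_zero L P ε hsign hortho hdeg z a0 h0
end

section
/- The Christoffel–Darboux formula holds: (x_j − ȳ_j) K_n(x,y) = [A_{n,j} ℙ_{n+1}(x)]^T conj(ℙ_n(y)) − ℙ_n(x)^T [A_{n,j} conj(ℙ_{n+1}(y))] for all x, y ∈ ℂ^d and each 1 ≤ j ≤ d, where K_n(x,y) = Σ_{k=0}^n ℙ_k(x)^T S_k conj(ℙ_k(y)). -/
open MvPolynomial Matrix Finset

private lemma cd_key {ι κ ι' : Type*} [Fintype ι] [Fintype κ] [Fintype ι']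
    (A : ι → κ → ℂ) (Bm : ι → ι → ℂ) (C : ι' → ι → ℂ)
    (hB : ∀ a b, Bm a b = Bm b a)
    (e px qy : ι → ℂ) (px' qy' : κ → ℂ) (plx qly : ι' → ℂ) (xj yj : ℂ)
    (hx : ∀ a, xj * (e a * px a) =
      (∑ c, A a c * px' c) + (∑ b, Bm a b * px b) + (∑ b, C b a * plx b))
    (hy : ∀ a, yj * (e a * qy a) =
      (∑ c, A a c * qy' c) + (∑ b, Bm a b * qy b) + (∑ b, C b a * qly b)) :
    (xj - yj) * ∑ a, e a * px a * qy a =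
      ((∑ a, (∑ c, A a c * px' c) * qy a) - ∑ a, px a * ∑ c, A a c * qy' c)
      - ((∑ b, (∑ a, C b a * px a) * qly b) - ∑ b, plx b * ∑ a, C b a * qy a) := by
  have h1 : (xj - yj) * ∑ a, e a * px a * qy a
      = ∑ a, ((xj * (e a * px a)) * qy a - px a * (yj * (e a * qy a))) := by
    rw [Finset.mul_sum]
    exact Finset.sum_congr rfl fun a _ => by ring
  have h2 : ∀ a : ι, (xj * (e a * px a)) * qy a - px a * (yj * (e a * qy a))
      = ((∑ c, A a c * px' c) * qy a - px a * ∑ c, A a c * qy' c)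
        + ((∑ b, Bm a b * px b) * qy a - px a * ∑ b, Bm a b * qy b)
        + ((∑ b, C b a * plx b) * qy a - px a * ∑ b, C b a * qly b) := by
    intro a; rw [hx a, hy a]; ring
  rw [h1, Finset.sum_congr rfl fun a _ => h2 a]
  rw [Finset.sum_add_distrib, Finset.sum_add_distrib]
  have hBzero : ∑ a, ((∑ b, Bm a b * px b) * qy a - px a * ∑ b, Bm a b * qy b) = 0 := by
    rw [Finset.sum_sub_distrib, sub_eq_zero]
    simp_rw [Finset.sum_mul, Finset.mul_sum]
    rw [Finset.sum_comm]
    exact Finset.sum_congr rfl fun a _ => Finset.sum_congr rfl fun b _ => by rw [hB b a]; ring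
  have hC : ∑ a, ((∑ b, C b a * plx b) * qy a - px a * ∑ b, C b a * qly b)
      = -(((∑ b, (∑ a, C b a * px a) * qly b) - ∑ b, plx b * ∑ a, C b a * qy a)) := by
    rw [neg_sub, Finset.sum_sub_distrib]
    congr 1
    · simp_rw [Finset.sum_mul, Finset.mul_sum]
      rw [Finset.sum_comm]
      exact Finset.sum_congr rfl fun a _ => Finset.sum_congr rfl fun b _ => by ring
    · simp_rw [Finset.sum_mul, Finset.mul_sum]
      rw [Finset.sum_comm]
      exact Finset.sum_congr rfl fun a _ => Finset.sum_congr rfl fun b _ => by ring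
  rw [hBzero, hC, Finset.sum_sub_distrib]
  ring

/-- The reproducing kernel `K_n(x,y) = ∑_{k=0}^n ℙ_k(x)ᵀ S_k conj(ℙ_k(y))`. -/
noncomputable def Kker {d : ℕ} (P : ∀ k : ℕ, ExactDeg d k → MvPolynomial (Fin d) ℝ)
    (ε : ∀ k : ℕ, ExactDeg d k → ℝ) (n : ℕ) (x y : Fin d → ℂ) : ℂ :=
  ∑ k ∈ Finset.range (n + 1), ∑ a : ExactDeg d k,
    (ε k a : ℂ) * aeval x (P k a) * (starRingEnd ℂ) (aeval y (P k a))

/-- Christoffel–Darboux formula: `(x_j - ȳ_j) K_n(x,y) =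
[A_{n,j} ℙ_{n+1}(x)]ᵀ conj(ℙ_n(y)) - ℙ_n(x)ᵀ [A_{n,j} conj(ℙ_{n+1}(y))]`. -/
theorem christoffel_darboux
    (d : ℕ)
    (P : ∀ k : ℕ, ExactDeg d k → MvPolynomial (Fin d) ℝ)
    (ε : ∀ k : ℕ, ExactDeg d k → ℝ)
    (hsign : ∀ k a, ε k a = 1 ∨ ε k a = -1)
    (A : ∀ k : ℕ, Fin d → Matrix (ExactDeg d k) (ExactDeg d (k + 1)) ℝ)
    (B : ∀ k : ℕ, Fin d → Matrix (ExactDeg d k) (ExactDeg d k) ℝ)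
    (hBsym : ∀ (k : ℕ) (j : Fin d), (B k j)ᵀ = B k j)
    (hrec0 : ∀ (j : Fin d) (a : ExactDeg d 0),
      X j * (ε 0 a • P 0 a) =
        (∑ c, A 0 j a c • P 1 c) + ∑ b, B 0 j a b • P 0 b)
    (hrecS : ∀ (m : ℕ) (j : Fin d) (a : ExactDeg d (m + 1)),
      X j * (ε (m + 1) a • P (m + 1) a) =
        (∑ c, A (m + 1) j a c • P (m + 2) c) + (∑ b, B (m + 1) j a b • P (m + 1) b)
          + ∑ b, A m j b a • P m b) :
    ∀ (n : ℕ) (j : Fin d) (x y : Fin d → ℂ),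
      (x j - (starRingEnd ℂ) (y j)) * Kker P ε n x y =
        (∑ a : ExactDeg d n,
          (∑ c, (A n j a c : ℂ) * aeval x (P (n + 1) c)) *
            (starRingEnd ℂ) (aeval y (P n a))) -
        ∑ a : ExactDeg d n,
          aeval x (P n a) *
            (∑ c, (A n j a c : ℂ) * (starRingEnd ℂ) (aeval y (P (n + 1) c))) := by
  intro n j x y
  -- notation
  set F : ℕ → ℂ := fun m =>
    (∑ a : ExactDeg d m,
      (∑ c, (A m j a c : ℂ) * aeval x (P (m + 1) c)) *
        (starRingEnd ℂ) (aeval y (P m a))) -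
    ∑ a : ExactDeg d m,
      aeval x (P m a) *
        (∑ c, (A m j a c : ℂ) * (starRingEnd ℂ) (aeval y (P (m + 1) c))) with hF
  set G : ℕ → ℂ := fun k => Nat.rec 0 (fun m _ => F m) k with hG
  have hGsucc : ∀ m, G (m + 1) = F m := fun m => rfl
  have hG0 : G 0 = 0 := rfl
  have key : ∀ k : ℕ,
      (x j - (starRingEnd ℂ) (y j)) *
        (∑ a : ExactDeg d k,
          (ε k a : ℂ) * aeval x (P k a) * (starRingEnd ℂ) (aeval y (P k a)))
      = G (k + 1) - G k := by
    intro k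
    cases k with
    | zero =>
      have hx : ∀ a : ExactDeg d 0,
          x j * ((ε 0 a : ℂ) * aeval x (P 0 a)) =
            (∑ c, (A 0 j a c : ℂ) * aeval x (P 1 c)) +
              (∑ b, (B 0 j a b : ℂ) * aeval x (P 0 b)) +
              ∑ b : ExactDeg d 0, (0 : ℂ) * (0 : ℂ) := by
        intro a
        have h := congrArg (aeval x) (hrec0 j a)
        simp only [_root_.map_mul, map_add, map_sum, _root_.map_smul, aeval_X,
          Complex.real_smul] at h
        simp only [zero_mul, Finset.sum_const_zero, add_zero]
        linear_combination h
      have hy : ∀ a : ExactDeg d 0,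
          (starRingEnd ℂ) (y j) * ((ε 0 a : ℂ) * (starRingEnd ℂ) (aeval y (P 0 a))) =
            (∑ c, (A 0 j a c : ℂ) * (starRingEnd ℂ) (aeval y (P 1 c))) +
              (∑ b, (B 0 j a b : ℂ) * (starRingEnd ℂ) (aeval y (P 0 b))) +
              ∑ b : ExactDeg d 0, (0 : ℂ) * (0 : ℂ) := by
        intro a
        have h := congrArg (fun p => (starRingEnd ℂ) (aeval y p)) (hrec0 j a)
        simp only [_root_.map_mul, map_add, map_sum, _root_.map_smul, aeval_X,
          Complex.real_smul, Complex.conj_ofReal] at h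
        simp only [zero_mul, Finset.sum_const_zero, add_zero]
        linear_combination h
      have h := cd_key (fun a c => (A 0 j a c : ℂ)) (fun a b => (B 0 j a b : ℂ))
        (fun (b : ExactDeg d 0) (a : ExactDeg d 0) => (0 : ℂ))
        (fun a b => by
          have := congrFun (congrFun (hBsym 0 j) a) b
          simp only [Matrix.transpose_apply] at this
          show ((B 0 j a b : ℝ) : ℂ) = ((B 0 j b a : ℝ) : ℂ)
          exact_mod_cast this.symm)
        (fun a => (ε 0 a : ℂ)) (fun a => aeval x (P 0 a))
        (fun a => (starRingEnd ℂ) (aeval y (P 0 a)))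
        (fun c => aeval x (P 1 c)) (fun c => (starRingEnd ℂ) (aeval y (P 1 c)))
        (fun _ => (0 : ℂ)) (fun _ => (0 : ℂ))
        (x j) ((starRingEnd ℂ) (y j))
        (by intro a; simpa using hx a) (by intro a; simpa using hy a)
      rw [hGsucc, hG0, hF, sub_zero]
      simpa using h
    | succ m =>
      have hx : ∀ a : ExactDeg d (m + 1),
          x j * ((ε (m + 1) a : ℂ) * aeval x (P (m + 1) a)) =
            (∑ c, (A (m + 1) j a c : ℂ) * aeval x (P (m + 2) c)) +
              (∑ b, (B (m + 1) j a b : ℂ) * aeval x (P (m + 1) b)) +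
              ∑ b, (A m j b a : ℂ) * aeval x (P m b) := by
        intro a
        have h := congrArg (aeval x) (hrecS m j a)
        simp only [_root_.map_mul, map_add, map_sum, _root_.map_smul, aeval_X,
          Complex.real_smul] at h
        linear_combination h
      have hy : ∀ a : ExactDeg d (m + 1),
          (starRingEnd ℂ) (y j) * ((ε (m + 1) a : ℂ) * (starRingEnd ℂ) (aeval y (P (m + 1) a))) =
            (∑ c, (A (m + 1) j a c : ℂ) * (starRingEnd ℂ) (aeval y (P (m + 2) c))) +
              (∑ b, (B (m + 1) j a b : ℂ) * (starRingEnd ℂ) (aeval y (P (m + 1) b))) +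
              ∑ b, (A m j b a : ℂ) * (starRingEnd ℂ) (aeval y (P m b)) := by
        intro a
        have h := congrArg (fun p => (starRingEnd ℂ) (aeval y p)) (hrecS m j a)
        simp only [_root_.map_mul, map_add, map_sum, _root_.map_smul, aeval_X,
          Complex.real_smul, Complex.conj_ofReal] at h
        linear_combination h
      have h := cd_key (fun a c => (A (m + 1) j a c : ℂ)) (fun a b => (B (m + 1) j a b : ℂ))
        (fun (b : ExactDeg d m) (a : ExactDeg d (m + 1)) => (A m j b a : ℂ))
        (fun a b => by
          have := congrFun (congrFun (hBsym (m + 1) j) a) b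
          simp only [Matrix.transpose_apply] at this
          show ((B (m + 1) j a b : ℝ) : ℂ) = ((B (m + 1) j b a : ℝ) : ℂ)
          exact_mod_cast this.symm)
        (fun a => (ε (m + 1) a : ℂ)) (fun a => aeval x (P (m + 1) a))
        (fun a => (starRingEnd ℂ) (aeval y (P (m + 1) a)))
        (fun c => aeval x (P (m + 2) c)) (fun c => (starRingEnd ℂ) (aeval y (P (m + 2) c)))
        (fun b => aeval x (P m b)) (fun b => (starRingEnd ℂ) (aeval y (P m b)))
        (x j) ((starRingEnd ℂ) (y j)) hx hy
      rw [hGsucc, hGsucc, hF]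
      exact h
  rw [Kker, Finset.mul_sum]
  calc ∑ k ∈ Finset.range (n + 1),
        (x j - (starRingEnd ℂ) (y j)) *
          ∑ a : ExactDeg d k,
            (ε k a : ℂ) * aeval x (P k a) * (starRingEnd ℂ) (aeval y (P k a))
      = ∑ k ∈ Finset.range (n + 1), (G (k + 1) - G k) :=
        Finset.sum_congr rfl fun k _ => key k
    _ = G (n + 1) - G 0 := Finset.sum_range_sub G (n + 1)
    _ = F n := by rw [hGsucc, hG0, sub_zero]
end

section
/- Let μ and μ^n be moment sequences on ℕ₀^d with μ^n_α = μ_α for |α| ≤ n−1, and suppose both infinite moment (Hankel) matrices annihilate the coefficient matrix of a polynomial vector F_n whose leading block F̂_{n,n} is invertible: M_n F̂_n = 0 and M^n_n F̂_n = 0, where F̂_n = [F̂_{n,n-1}; F̂_{n,n}]. Then μ^n_α = μ_α for all |α| ≤ 2n−1. -/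
open Matrix Finset

/-- Any `k ≤ ∑ α` can be realized as the total degree of a multi-index `c ≤ α`. -/
lemma exists_le_sum_eq (d : ℕ) (α : Fin d → ℕ) (k : ℕ) (hk : k ≤ ∑ i, α i) :
    ∃ c : Fin d → ℕ, (∀ i, c i ≤ α i) ∧ ∑ i, c i = k := by
  induction k with
  | zero => exact ⟨0, fun i => Nat.zero_le _, by simp⟩
  | succ k ih =>
    obtain ⟨c, hc, hsum⟩ := ih (by omega)
    have hex : ∃ i, c i < α i := by
      by_contra h
      push_neg at h
      have : ∑ i, α i ≤ ∑ i, c i := Finset.sum_le_sum (fun i _ => h i)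
      omega
    obtain ⟨i, hi⟩ := hex
    refine ⟨Function.update c i (c i + 1), fun j => ?_, ?_⟩
    · rcases eq_or_ne j i with rfl | hj
      · simpa using hi
      · simp [Function.update_of_ne hj, hc j]
    · rw [Finset.sum_update_of_mem (Finset.mem_univ i), ← Finset.erase_eq]
      have := Finset.add_sum_erase Finset.univ c (Finset.mem_univ i)
      omega

/-- If the moment sequences `μ` and `μⁿ` agree for `|α| ≤ n-1` and the moment matrices of degree
`n` of both annihilate the coefficient matrix `F̂` of a polynomial vector whose leading block is
invertible, then `μⁿ_α = μ_α` for all `|α| ≤ 2n-1`. -/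
theorem moment_sequences_agree_up_to_2n_sub_1
    (d n : ℕ) (hn : 1 ≤ n) (μ μn : (Fin d → ℕ) → ℝ)
    (hlow : ∀ α : Fin d → ℕ, (∑ i, α i) + 1 ≤ n → μn α = μ α)
    (Fhat : Matrix (DegLE d n) (ExactDeg d n) ℝ)
    (hFtop : IsUnit
      (Matrix.of fun a b : ExactDeg d n => Fhat ⟨a.1, le_of_eq a.2⟩ b).det)
    (hM : (Matrix.of fun a b : DegLE d n =>
        μ (fun i => (a.1 i : ℕ) + (b.1 i : ℕ))) * Fhat = 0)
    (hMn : (Matrix.of fun a b : DegLE d n =>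
        μn (fun i => (a.1 i : ℕ) + (b.1 i : ℕ))) * Fhat = 0) :
    ∀ α : Fin d → ℕ, (∑ i, α i) + 1 ≤ 2 * n → μn α = μ α := by
  set Ftop : Matrix (ExactDeg d n) (ExactDeg d n) ℝ :=
    Matrix.of fun a b : ExactDeg d n => Fhat ⟨a.1, le_of_eq a.2⟩ b with hFt
  -- annihilation for the difference ω = μ - μn
  have hann : ∀ a : DegLE d n, ∀ b : ExactDeg d n,
      ∑ c : DegLE d n, (μ (fun i => (a.1 i : ℕ) + (c.1 i : ℕ)) -
        μn (fun i => (a.1 i : ℕ) + (c.1 i : ℕ))) * Fhat c b = 0 := by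
    intro a b
    have h1 := congrFun (congrFun hM a) b
    have h2 := congrFun (congrFun hMn a) b
    rw [Matrix.mul_apply] at h1 h2
    simp only [Matrix.zero_apply] at h1 h2
    have := sub_eq_zero_of_eq (h1.trans h2.symm)
    rw [← Finset.sum_sub_distrib] at this
    simpa [sub_mul, Matrix.of_apply] using this
  suffices H : ∀ m, ∀ α : Fin d → ℕ, ∑ i, α i = m → m < 2 * n → μn α = μ α by
    intro α hα
    exact H _ α rfl (by omega)
  intro m
  induction m using Nat.strong_induction_on with
  | _ m ih =>
    intro α hα hm
    by_cases hcase : m < n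
    · exact hlow α (by omega)
    · push_neg at hcase
      obtain ⟨c, hcle, hcsum⟩ := exists_le_sum_eq d α n (by omega)
      set a : Fin d → ℕ := fun i => α i - c i with ha
      have haddc : ∀ i, a i + c i = α i := fun i => by
        have := hcle i
        simp only [ha]
        omega
      have hasum : ∑ i, a i = m - n := by
        have : ∑ i, (a i + c i) = ∑ i, α i := by
          exact Finset.sum_congr rfl (fun i _ => haddc i)
        rw [Finset.sum_add_distrib] at this
        omega
      have hai : ∀ i, a i < n + 1 := by
        intro i
        have h1 := Finset.single_le_sum (f := a) (fun j _ => Nat.zero_le _)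
          (Finset.mem_univ i)
        rw [hasum] at h1
        omega
      have hci : ∀ i, c i < n + 1 := by
        intro i
        have h1 := Finset.single_le_sum (f := c) (fun j _ => Nat.zero_le _)
          (Finset.mem_univ i)
        rw [hcsum] at h1
        omega
      set aD : DegLE d n := ⟨fun i => ⟨a i, hai i⟩, by
        simpa [hasum] using (by omega : m - n ≤ n)⟩ with haD
      set cE : ExactDeg d n := ⟨fun i => ⟨c i, hci i⟩, by simpa using hcsum⟩ with hcE
      -- the vector of differences of degree-n shifts
      set v : ExactDeg d n → ℝ := fun e =>
        μ (fun i => a i + (e.1 i : ℕ)) - μn (fun i => a i + (e.1 i : ℕ)) with hv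
      have hvann : ∀ b : ExactDeg d n, ∑ e : ExactDeg d n, v e * Ftop e b = 0 := by
        intro b
        have h0 := hann aD b
        -- terms of degree < n vanish by the induction hypothesis
        have hzero : ∀ cD : DegLE d n, (∑ i, (cD.1 i : ℕ)) ≠ n →
            (μ (fun i => (aD.1 i : ℕ) + (cD.1 i : ℕ)) -
              μn (fun i => (aD.1 i : ℕ) + (cD.1 i : ℕ))) * Fhat cD b = 0 := by
          intro cD hne
          have hlt : ∑ i, (cD.1 i : ℕ) < n := lt_of_le_of_ne cD.2 hne
          have hsum' : ∑ i, ((aD.1 i : ℕ) + (cD.1 i : ℕ)) =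
              (m - n) + ∑ i, (cD.1 i : ℕ) := by
            have h2 : ∑ i, ((aD.1 i : ℕ)) = m - n := hasum
            rw [Finset.sum_add_distrib, h2]
          have := ih ((m - n) + ∑ i, (cD.1 i : ℕ)) (by omega)
            (fun i => (aD.1 i : ℕ) + (cD.1 i : ℕ)) hsum' (by omega)
          rw [this, sub_self, zero_mul]
        -- reduce the sum over DegLE to a sum over ExactDeg
        have hsplit : ∑ cD : DegLE d n,
            (μ (fun i => (aD.1 i : ℕ) + (cD.1 i : ℕ)) -
              μn (fun i => (aD.1 i : ℕ) + (cD.1 i : ℕ))) * Fhat cD b =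
            ∑ e : ExactDeg d n, v e * Ftop e b := by
          rw [← Finset.sum_filter_of_ne (p := fun cD : DegLE d n =>
            ∑ i, (cD.1 i : ℕ) = n) (fun x _ hx => by
              by_contra hne
              exact hx (hzero x hne))]
          refine Finset.sum_bij'
            (fun cD (hcD : cD ∈ Finset.univ.filter (fun cD : DegLE d n =>
              ∑ i, (cD.1 i : ℕ) = n)) =>
              (⟨cD.1, (Finset.mem_filter.mp hcD).2⟩ : ExactDeg d n))
            (fun e _ => (⟨e.1, le_of_eq e.2⟩ : DegLE d n))
            (fun _ _ => Finset.mem_univ _) ?_ ?_ ?_ ?_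
          · intro e _
            simp [e.2]
          · intro cD hcD
            rfl
          · intro e _
            rfl
          · intro cD hcD
            rfl
        rw [hsplit] at h0
        exact h0
      have hvzero : v = 0 := by
        have h1 : Matrix.vecMul v Ftop = 0 := by
          funext b
          simpa [Matrix.vecMul, dotProduct] using hvann b
        calc v = Matrix.vecMul v (Ftop * Ftop⁻¹) := by
              rw [Matrix.mul_nonsing_inv _ hFtop, Matrix.vecMul_one]
          _ = Matrix.vecMul (Matrix.vecMul v Ftop) Ftop⁻¹ := by
              rw [Matrix.vecMul_vecMul]
          _ = 0 := by rw [h1, Matrix.zero_vecMul]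
      have := congrFun hvzero cE
      simp only [hv, Pi.zero_apply] at this
      have hα' : (fun i => a i + ((cE.1 i : ℕ))) = α := by
        funext i
        exact haddc i
      rw [hα'] at this
      linarith [this]
end
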